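/- arXiv:1207.5762 — 7 statements merged into one kernel-verified Lean document; each statement's English description precedes it below -/
import Mathlib

section
/- Let f : [0,1]² → [0,∞) be integrable with ∫₀¹ f(x,y) dx = 1 for a.e. y and ∫₀¹ f(x,y) dy = 1 for a.e. x. Suppose there exist nonnegative integrable functions ε₁, ε₂ : [0,1] → [0,∞) such that f(x,y) ≥ ε₁(x) + ε₂(y) for a.e. (x,y). Then ∫₀¹ ε₁ + ∫₀¹ ε₂ < 2, and for all g, h ∈ L²(0,1) that are mean-zero, |∫₀¹∫₀¹ f(x,y) g(x) h(y) dx dy| ≤ (1 − ½(∫₀¹ ε₁ + ∫₀¹ ε₂)) ‖g‖₂ ‖h‖₂. -/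
/-!
Subtracting the lower bound leaves the nonnegative kernel `K(x,y) = f(x,y) - ε₁(x) - ε₂(y)`,
whose rows integrate to `1 - ε₁(x) - ∫ε₂ ≤ 1 - ∫ε₂` and whose columns to at most `1 - ∫ε₁`;
in particular `∫ε₁ + ∫ε₂ ≤ 1`. Against mean-zero `g` and `h` the part `ε₁(x) + ε₂(y)`
integrates to zero, so the correlation is `∫∫ K g h`. The Schur test (Cauchy–Schwarz with
weight `K`, then integrating out one variable in each factor) bounds it by
`√((1 - ∫ε₂) ‖g‖²) √((1 - ∫ε₁) ‖h‖²)`, and AM–GM turns `√((1 - ∫ε₁)(1 - ∫ε₂))` into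
`1 - ½(∫ε₁ + ∫ε₂)`.
-/

open MeasureTheory

def I01 : Set ℝ := Set.Icc 0 1

noncomputable def μ01 : Measure ℝ := volume.restrict I01

section WeightedCauchySchwarz

variable {Ω : Type*} [MeasurableSpace Ω] {μ : Measure Ω} {w u v : Ω → ℝ}

theorem integrable_weight_mul_mul (hw : 0 ≤ᵐ[μ] w)
    (hu : Integrable (fun x => w x * u x ^ 2) μ) (hv : Integrable (fun x => w x * v x ^ 2) μ)
    (huv : AEStronglyMeasurable (fun x => w x * u x * v x) μ) :
    Integrable (fun x => w x * u x * v x) μ := by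
  refine ((hu.add hv).div_const 2).mono' huv ?_
  filter_upwards [hw] with x (hx : 0 ≤ w x)
  show |w x * u x * v x| ≤ (w x * u x ^ 2 + w x * v x ^ 2) / 2
  rw [abs_mul, abs_mul, abs_of_nonneg hx]
  nlinarith [mul_nonneg hx (sq_nonneg (|u x| - |v x|)), sq_abs (u x), sq_abs (v x)]

theorem abs_integral_weight_mul_mul_le (hw : 0 ≤ᵐ[μ] w)
    (hu : Integrable (fun x => w x * u x ^ 2) μ) (hv : Integrable (fun x => w x * v x ^ 2) μ)
    (huv : Integrable (fun x => w x * u x * v x) μ) :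
    |∫ x, w x * u x * v x ∂μ| ≤ √(∫ x, w x * u x ^ 2 ∂μ) * √(∫ x, w x * v x ^ 2 ∂μ) := by
  set A := ∫ x, w x * u x ^ 2 ∂μ
  set B := ∫ x, w x * v x ^ 2 ∂μ
  set C := ∫ x, w x * u x * v x ∂μ
  -- `t ↦ ∫ w (t u + v)²` is a nonnegative quadratic polynomial
  have hquad : ∀ t : ℝ, 0 ≤ A * (t * t) + 2 * C * t + B := by
    intro t
    have hexpand : ∫ x, w x * (t * u x + v x) ^ 2 ∂μ = A * (t * t) + 2 * C * t + B := by
      have : (fun x => w x * (t * u x + v x) ^ 2) =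
          fun x => (t * t) * (w x * u x ^ 2) + (2 * t) * (w x * u x * v x) + w x * v x ^ 2 := by
        ext x; ring
      have hsum : Integrable
          (fun x => (t * t) * (w x * u x ^ 2) + (2 * t) * (w x * u x * v x)) μ :=
        (hu.const_mul _).add (huv.const_mul _)
      rw [this, integral_add hsum hv, integral_add (hu.const_mul _) (huv.const_mul _),
        integral_const_mul, integral_const_mul]
      ring
    rw [← hexpand]
    exact integral_nonneg_of_ae (hw.mono fun x hx => mul_nonneg hx (sq_nonneg _))
  have hdisc := discrim_le_zero hquad
  have hA : 0 ≤ A := integral_nonneg_of_ae (hw.mono fun x hx => mul_nonneg hx (sq_nonneg _))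
  rw [← Real.sqrt_mul hA]
  apply Real.abs_le_sqrt
  rw [discrim] at hdisc
  nlinarith

end WeightedCauchySchwarz

section SchurTest

variable {α β : Type*} [MeasurableSpace α] [MeasurableSpace β] {μ : Measure α} {ν : Measure β}
  [SFinite μ] [SFinite ν] {K : α × β → ℝ} {A B : ℝ}

theorem lintegral_ofReal_kernel_mul_sq_fst_le (hK : Integrable K (μ.prod ν))
    (hK0 : 0 ≤ᵐ[μ.prod ν] K) (hrow : ∀ᵐ x ∂μ, ∫ y, K (x, y) ∂ν ≤ A) {g : α → ℝ}
    (hg : MemLp g 2 μ) :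
    ∫⁻ p, ENNReal.ofReal (K p * g p.1 ^ 2) ∂(μ.prod ν) ≤
      ENNReal.ofReal (A * ∫ x, g x ^ 2 ∂μ) := by
  have hrow' : ∀ᵐ x ∂μ, ∫⁻ y, ENNReal.ofReal (K (x, y)) ∂ν ≤ ENNReal.ofReal A := by
    filter_upwards [hK.prod_right_ae, hrow, Measure.ae_ae_of_ae_prod hK0] with x hint hle h0
    rw [← ofReal_integral_eq_lintegral_ofReal hint h0]
    exact ENNReal.ofReal_le_ofReal hle
  have hg2 : Integrable (fun x => g x ^ 2) μ := hg.integrable_sq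
  calc ∫⁻ p, ENNReal.ofReal (K p * g p.1 ^ 2) ∂(μ.prod ν)
      = ∫⁻ p, ENNReal.ofReal (K p) * ENNReal.ofReal (g p.1 ^ 2) ∂(μ.prod ν) := by
        refine lintegral_congr_ae ?_
        filter_upwards [hK0] with p hp
        exact ENNReal.ofReal_mul hp
    _ = ∫⁻ x, (∫⁻ y, ENNReal.ofReal (K (x, y)) ∂ν) * ENNReal.ofReal (g x ^ 2) ∂μ := by
        rw [lintegral_prod (fun p => ENNReal.ofReal (K p) * ENNReal.ofReal (g p.1 ^ 2))
          (hK.1.aemeasurable.ennreal_ofReal.mul hg2.1.comp_fst.aemeasurable.ennreal_ofReal)]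
        exact lintegral_congr fun x =>
          lintegral_mul_const' (ENNReal.ofReal (g x ^ 2)) _ ENNReal.ofReal_ne_top
    _ ≤ ∫⁻ x, ENNReal.ofReal A * ENNReal.ofReal (g x ^ 2) ∂μ := by
        refine lintegral_mono_ae ?_
        filter_upwards [hrow'] with x hx
        gcongr
    _ = ENNReal.ofReal (A * ∫ x, g x ^ 2 ∂μ) := by
        rw [lintegral_const_mul' _ _ ENNReal.ofReal_ne_top,
          ← ofReal_integral_eq_lintegral_ofReal hg2 (ae_of_all _ fun x => sq_nonneg _),
          ENNReal.ofReal_mul' (integral_nonneg fun x => sq_nonneg _)]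

theorem integrable_kernel_mul_sq_fst (hK : Integrable K (μ.prod ν)) (hK0 : 0 ≤ᵐ[μ.prod ν] K)
    (hrow : ∀ᵐ x ∂μ, ∫ y, K (x, y) ∂ν ≤ A) {g : α → ℝ} (hg : MemLp g 2 μ) :
    Integrable (fun p => K p * g p.1 ^ 2) (μ.prod ν) := by
  have hnonneg : 0 ≤ᵐ[μ.prod ν] fun p => K p * g p.1 ^ 2 :=
    hK0.mono fun p hp => mul_nonneg hp (sq_nonneg _)
  refine ⟨hK.1.mul hg.integrable_sq.1.comp_fst, (hasFiniteIntegral_iff_ofReal hnonneg).2 ?_⟩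
  exact (lintegral_ofReal_kernel_mul_sq_fst_le hK hK0 hrow hg).trans_lt ENNReal.ofReal_lt_top

theorem integral_kernel_mul_sq_fst_le (hK : Integrable K (μ.prod ν)) (hK0 : 0 ≤ᵐ[μ.prod ν] K)
    (hA : 0 ≤ A) (hrow : ∀ᵐ x ∂μ, ∫ y, K (x, y) ∂ν ≤ A) {g : α → ℝ} (hg : MemLp g 2 μ) :
    ∫ p, K p * g p.1 ^ 2 ∂(μ.prod ν) ≤ A * ∫ x, g x ^ 2 ∂μ := by
  rw [integral_eq_lintegral_of_nonneg_ae (hK0.mono fun p hp => mul_nonneg hp (sq_nonneg _))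
    (integrable_kernel_mul_sq_fst hK hK0 hrow hg).1]
  exact ENNReal.toReal_le_of_le_ofReal (mul_nonneg hA (integral_nonneg fun x => sq_nonneg _))
    (lintegral_ofReal_kernel_mul_sq_fst_le hK hK0 hrow hg)

theorem ae_nonneg_comp_swap (hK0 : 0 ≤ᵐ[μ.prod ν] K) : 0 ≤ᵐ[ν.prod μ] (K ∘ Prod.swap) :=
  Measure.measurePreserving_swap.quasiMeasurePreserving.ae hK0

theorem integrable_kernel_mul_sq_snd (hK : Integrable K (μ.prod ν)) (hK0 : 0 ≤ᵐ[μ.prod ν] K)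
    (hcol : ∀ᵐ y ∂ν, ∫ x, K (x, y) ∂μ ≤ B) {h : β → ℝ} (hh : MemLp h 2 ν) :
    Integrable (fun p => K p * h p.2 ^ 2) (μ.prod ν) :=
  integrable_swap_iff.mp (integrable_kernel_mul_sq_fst hK.swap (ae_nonneg_comp_swap hK0) hcol hh)

theorem integral_kernel_mul_sq_snd_le (hK : Integrable K (μ.prod ν)) (hK0 : 0 ≤ᵐ[μ.prod ν] K)
    (hB : 0 ≤ B) (hcol : ∀ᵐ y ∂ν, ∫ x, K (x, y) ∂μ ≤ B) {h : β → ℝ} (hh : MemLp h 2 ν) :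
    ∫ p, K p * h p.2 ^ 2 ∂(μ.prod ν) ≤ B * ∫ y, h y ^ 2 ∂ν := by
  rw [← integral_prod_swap]
  exact integral_kernel_mul_sq_fst_le hK.swap (ae_nonneg_comp_swap hK0) hB hcol hh

variable {g : α → ℝ} {h : β → ℝ}

theorem integrable_kernel_mul_mul (hK : Integrable K (μ.prod ν)) (hK0 : 0 ≤ᵐ[μ.prod ν] K)
    (hrow : ∀ᵐ x ∂μ, ∫ y, K (x, y) ∂ν ≤ A) (hcol : ∀ᵐ y ∂ν, ∫ x, K (x, y) ∂μ ≤ B)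
    (hg : MemLp g 2 μ) (hh : MemLp h 2 ν) :
    Integrable (fun p => K p * g p.1 * h p.2) (μ.prod ν) :=
  integrable_weight_mul_mul hK0 (integrable_kernel_mul_sq_fst hK hK0 hrow hg)
    (integrable_kernel_mul_sq_snd hK hK0 hcol hh) ((hK.1.mul hg.1.comp_fst).mul hh.1.comp_snd)

theorem abs_integral_kernel_mul_mul_le (hK : Integrable K (μ.prod ν)) (hK0 : 0 ≤ᵐ[μ.prod ν] K)
    (hA : 0 ≤ A) (hB : 0 ≤ B)
    (hrow : ∀ᵐ x ∂μ, ∫ y, K (x, y) ∂ν ≤ A) (hcol : ∀ᵐ y ∂ν, ∫ x, K (x, y) ∂μ ≤ B)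
    (hg : MemLp g 2 μ) (hh : MemLp h 2 ν) :
    |∫ p, K p * g p.1 * h p.2 ∂(μ.prod ν)| ≤
      √(A * ∫ x, g x ^ 2 ∂μ) * √(B * ∫ y, h y ^ 2 ∂ν) := by
  refine (abs_integral_weight_mul_mul_le hK0 (integrable_kernel_mul_sq_fst hK hK0 hrow hg)
    (integrable_kernel_mul_sq_snd hK hK0 hcol hh)
    (integrable_kernel_mul_mul hK hK0 hrow hcol hg hh)).trans ?_
  gcongr
  · exact integral_kernel_mul_sq_fst_le hK hK0 hA hrow hg
  · exact integral_kernel_mul_sq_snd_le hK hK0 hB hcol hh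

end SchurTest

theorem Real.sqrt_mul_mul_sqrt_mul_le {s t : ℝ} (hs : 0 ≤ s) (ht : 0 ≤ t) (G H : ℝ) :
    √(s * G) * √(t * H) ≤ (s + t) / 2 * (√G * √H) := by
  rw [Real.sqrt_mul hs, Real.sqrt_mul ht]
  have hst : √s * √t ≤ (s + t) / 2 := by
    nlinarith [sq_nonneg (√s - √t), Real.sq_sqrt hs, Real.sq_sqrt ht]
  calc √s * √G * (√t * √H) = (√s * √t) * (√G * √H) := by ring
    _ ≤ (s + t) / 2 * (√G * √H) := by gcongr

section Copula

variable {α β : Type*} [MeasurableSpace α] [MeasurableSpace β] {μ : Measure α} {ν : Measure β}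
  {f : α → β → ℝ} {ε₁ : α → ℝ} {ε₂ : β → ℝ}

def residualKernel (f : α → β → ℝ) (ε₁ : α → ℝ) (ε₂ : β → ℝ) (p : α × β) : ℝ :=
  f p.1 p.2 - ε₁ p.1 - ε₂ p.2

theorem residualKernel_nonneg_ae (hdom : ∀ᵐ p ∂(μ.prod ν), ε₁ p.1 + ε₂ p.2 ≤ f p.1 p.2) :
    0 ≤ᵐ[μ.prod ν] residualKernel f ε₁ ε₂ :=
  hdom.mono fun p hp => by
    simp only [residualKernel, Pi.zero_apply]
    linarith

theorem integral_integral_mul_mul_eq_residualKernel [SFinite μ] [SFinite ν] {g : α → ℝ}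
    {h : β → ℝ}
    (hKgh : Integrable (fun p => residualKernel f ε₁ ε₂ p * g p.1 * h p.2) (μ.prod ν))
    (hε₁g : Integrable (fun x => ε₁ x * g x) μ) (hε₂h : Integrable (fun y => ε₂ y * h y) ν)
    (hg : Integrable g μ) (hh : Integrable h ν)
    (hg0 : ∫ x, g x ∂μ = 0) (hh0 : ∫ y, h y ∂ν = 0) :
    ∫ x, ∫ y, f x y * g x * h y ∂ν ∂μ =
      ∫ p, residualKernel f ε₁ ε₂ p * g p.1 * h p.2 ∂(μ.prod ν) := by
  have hsplit : (fun p : α × β => f p.1 p.2 * g p.1 * h p.2) = fun p =>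
      residualKernel f ε₁ ε₂ p * g p.1 * h p.2 +
        (ε₁ p.1 * g p.1 * h p.2 + g p.1 * (ε₂ p.2 * h p.2)) := by
    ext p
    simp only [residualKernel]
    ring
  have hsum : Integrable (fun p : α × β => ε₁ p.1 * g p.1 * h p.2 + g p.1 * (ε₂ p.2 * h p.2))
      (μ.prod ν) := (hε₁g.mul_prod hh).add (hg.mul_prod hε₂h)
  have hfgh : Integrable (fun p : α × β => f p.1 p.2 * g p.1 * h p.2) (μ.prod ν) := by
    rw [hsplit]
    exact hKgh.add hsum
  rw [integral_integral hfgh, hsplit, integral_add hKgh hsum,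
    integral_add (hε₁g.mul_prod hh) (hg.mul_prod hε₂h),
    integral_prod_mul (fun x => ε₁ x * g x) h, integral_prod_mul g (fun y => ε₂ y * h y),
    hg0, hh0]
  simp

variable [IsProbabilityMeasure μ] [IsProbabilityMeasure ν]

theorem integrable_residualKernel (hf_int : Integrable (Function.uncurry f) (μ.prod ν))
    (hε₁_int : Integrable ε₁ μ) (hε₂_int : Integrable ε₂ ν) :
    Integrable (residualKernel f ε₁ ε₂) (μ.prod ν) :=
  (hf_int.sub (hε₁_int.comp_fst ν)).sub (hε₂_int.comp_snd μ)

theorem ae_integral_residualKernel_right (hf_int : Integrable (Function.uncurry f) (μ.prod ν))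
    (hmarg_y : ∀ᵐ x ∂μ, ∫ y, f x y ∂ν = 1) (hε₂_int : Integrable ε₂ ν) :
    ∀ᵐ x ∂μ, ∫ y, residualKernel f ε₁ ε₂ (x, y) ∂ν = 1 - ε₁ x - ∫ y, ε₂ y ∂ν := by
  filter_upwards [hf_int.prod_right_ae, hmarg_y] with x (hint : Integrable (f x) ν) hx
  have hint' : Integrable (fun y => f x y - ε₁ x) ν := hint.sub (integrable_const _)
  simp only [residualKernel]
  rw [integral_sub hint' hε₂_int, integral_sub hint (integrable_const _), hx, integral_const]
  simp

theorem ae_integral_residualKernel_left (hf_int : Integrable (Function.uncurry f) (μ.prod ν))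
    (hmarg_x : ∀ᵐ y ∂ν, ∫ x, f x y ∂μ = 1) (hε₁_int : Integrable ε₁ μ) :
    ∀ᵐ y ∂ν, ∫ x, residualKernel f ε₁ ε₂ (x, y) ∂μ = 1 - (∫ x, ε₁ x ∂μ) - ε₂ y := by
  filter_upwards [hf_int.swap.prod_right_ae, hmarg_x] with y
    (hint : Integrable (fun x => f x y) μ) hy
  have hint' : Integrable (fun x => f x y - ε₁ x) μ := hint.sub hε₁_int
  simp only [residualKernel]
  rw [integral_sub hint' (integrable_const _), integral_sub hint hε₁_int, hy, integral_const]
  simp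

theorem ae_le_one_sub_integral_right (hf_int : Integrable (Function.uncurry f) (μ.prod ν))
    (hmarg_y : ∀ᵐ x ∂μ, ∫ y, f x y ∂ν = 1) (hε₂_int : Integrable ε₂ ν)
    (hdom : ∀ᵐ p ∂(μ.prod ν), ε₁ p.1 + ε₂ p.2 ≤ f p.1 p.2) :
    ∀ᵐ x ∂μ, ε₁ x ≤ 1 - ∫ y, ε₂ y ∂ν := by
  filter_upwards [ae_integral_residualKernel_right (ε₁ := ε₁) hf_int hmarg_y hε₂_int,
    Measure.ae_ae_of_ae_prod (residualKernel_nonneg_ae hdom)] with x hx h0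
  linarith [integral_nonneg_of_ae h0]

theorem ae_le_one_sub_integral_left (hf_int : Integrable (Function.uncurry f) (μ.prod ν))
    (hmarg_x : ∀ᵐ y ∂ν, ∫ x, f x y ∂μ = 1) (hε₁_int : Integrable ε₁ μ)
    (hdom : ∀ᵐ p ∂(μ.prod ν), ε₁ p.1 + ε₂ p.2 ≤ f p.1 p.2) :
    ∀ᵐ y ∂ν, ε₂ y ≤ 1 - ∫ x, ε₁ x ∂μ := by
  filter_upwards [ae_integral_residualKernel_left (ε₂ := ε₂) hf_int hmarg_x hε₁_int,
    Measure.ae_ae_of_ae_prod (ae_nonneg_comp_swap (residualKernel_nonneg_ae hdom))] with y hy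
    (h0 : ∀ᵐ x ∂μ, 0 ≤ residualKernel f ε₁ ε₂ (x, y))
  linarith [integral_nonneg_of_ae h0]

theorem integral_add_integral_le_one (hf_int : Integrable (Function.uncurry f) (μ.prod ν))
    (hmarg_y : ∀ᵐ x ∂μ, ∫ y, f x y ∂ν = 1)
    (hε₁_int : Integrable ε₁ μ) (hε₂_int : Integrable ε₂ ν)
    (hdom : ∀ᵐ p ∂(μ.prod ν), ε₁ p.1 + ε₂ p.2 ≤ f p.1 p.2) :
    (∫ x, ε₁ x ∂μ) + ∫ y, ε₂ y ∂ν ≤ 1 := by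
  have := integral_mono_ae hε₁_int (integrable_const _)
    (ae_le_one_sub_integral_right hf_int hmarg_y hε₂_int hdom)
  simp only [integral_const, probReal_univ, one_smul] at this
  linarith

theorem abs_integral_integral_mul_mul_le (hf_int : Integrable (Function.uncurry f) (μ.prod ν))
    (hmarg_x : ∀ᵐ y ∂ν, ∫ x, f x y ∂μ = 1) (hmarg_y : ∀ᵐ x ∂μ, ∫ y, f x y ∂ν = 1)
    (hε₁_nonneg : ∀ x, 0 ≤ ε₁ x) (hε₂_nonneg : ∀ y, 0 ≤ ε₂ y)
    (hε₁_int : Integrable ε₁ μ) (hε₂_int : Integrable ε₂ ν)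
    (hdom : ∀ᵐ p ∂(μ.prod ν), ε₁ p.1 + ε₂ p.2 ≤ f p.1 p.2)
    {g : α → ℝ} {h : β → ℝ} (hg : MemLp g 2 μ) (hh : MemLp h 2 ν)
    (hg0 : ∫ x, g x ∂μ = 0) (hh0 : ∫ y, h y ∂ν = 0) :
    |∫ x, ∫ y, f x y * g x * h y ∂ν ∂μ| ≤
      (1 - (1 / 2) * ((∫ x, ε₁ x ∂μ) + ∫ y, ε₂ y ∂ν)) *
        (√(∫ x, g x ^ 2 ∂μ) * √(∫ y, h y ^ 2 ∂ν)) := by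
  set a := ∫ x, ε₁ x ∂μ
  set b := ∫ y, ε₂ y ∂ν
  have hK := integrable_residualKernel hf_int hε₁_int hε₂_int
  have hK0 := residualKernel_nonneg_ae hdom
  have hab := integral_add_integral_le_one hf_int hmarg_y hε₁_int hε₂_int hdom
  have ha : 0 ≤ a := integral_nonneg hε₁_nonneg
  have hb : 0 ≤ b := integral_nonneg hε₂_nonneg
  have hrow : ∀ᵐ x ∂μ, ∫ y, residualKernel f ε₁ ε₂ (x, y) ∂ν ≤ 1 - b := by
    filter_upwards [ae_integral_residualKernel_right (ε₁ := ε₁) hf_int hmarg_y hε₂_int] with x hx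
    linarith [hε₁_nonneg x]
  have hcol : ∀ᵐ y ∂ν, ∫ x, residualKernel f ε₁ ε₂ (x, y) ∂μ ≤ 1 - a := by
    filter_upwards [ae_integral_residualKernel_left (ε₂ := ε₂) hf_int hmarg_x hε₁_int] with y hy
    linarith [hε₂_nonneg y]
  have hε₁g : Integrable (fun x => ε₁ x * g x) μ :=
    (hg.integrable one_le_two).bdd_mul hε₁_int.1
      ((ae_le_one_sub_integral_right hf_int hmarg_y hε₂_int hdom).mono fun x hx => by
        rwa [Real.norm_of_nonneg (hε₁_nonneg x)])
  have hε₂h : Integrable (fun y => ε₂ y * h y) ν :=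
    (hh.integrable one_le_two).bdd_mul hε₂_int.1
      ((ae_le_one_sub_integral_left hf_int hmarg_x hε₁_int hdom).mono fun y hy => by
        rwa [Real.norm_of_nonneg (hε₂_nonneg y)])
  calc |∫ x, ∫ y, f x y * g x * h y ∂ν ∂μ|
      = |∫ p, residualKernel f ε₁ ε₂ p * g p.1 * h p.2 ∂(μ.prod ν)| := by
        rw [integral_integral_mul_mul_eq_residualKernel
          (integrable_kernel_mul_mul hK hK0 hrow hcol hg hh) hε₁g hε₂h
          (hg.integrable one_le_two) (hh.integrable one_le_two) hg0 hh0]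
    _ ≤ √((1 - b) * ∫ x, g x ^ 2 ∂μ) * √((1 - a) * ∫ y, h y ^ 2 ∂ν) :=
        abs_integral_kernel_mul_mul_le hK hK0 (by linarith) (by linarith) hrow hcol hg hh
    _ ≤ ((1 - b) + (1 - a)) / 2 * (√(∫ x, g x ^ 2 ∂μ) * √(∫ y, h y ^ 2 ∂ν)) :=
        Real.sqrt_mul_mul_sqrt_mul_le (by linarith) (by linarith) _ _
    _ = (1 - (1 / 2) * (a + b)) * (√(∫ x, g x ^ 2 ∂μ) * √(∫ y, h y ^ 2 ∂ν)) := by ring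

end Copula

instance : IsProbabilityMeasure μ01 :=
  ⟨by simp [μ01, I01, Real.volume_Icc]⟩

theorem copula_density_lower_bound_correlation_general
    (f : ℝ → ℝ → ℝ) (ε₁ ε₂ : ℝ → ℝ)
    (hf_int : Integrable (Function.uncurry f) (μ01.prod μ01))
    (hmarg_x : ∀ᵐ y ∂μ01, (∫ x in I01, f x y) = 1)
    (hmarg_y : ∀ᵐ x ∂μ01, (∫ y in I01, f x y) = 1)
    (hε₁_nonneg : ∀ x, 0 ≤ ε₁ x) (hε₂_nonneg : ∀ x, 0 ≤ ε₂ x)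
    (hε₁_int : IntegrableOn ε₁ I01) (hε₂_int : IntegrableOn ε₂ I01)
    (hdom : ∀ᵐ p ∂(μ01.prod μ01), ε₁ p.1 + ε₂ p.2 ≤ f p.1 p.2) :
    (∫ x in I01, ε₁ x) + (∫ x in I01, ε₂ x) < 2 ∧
    ∀ g h : ℝ → ℝ, MemLp g 2 μ01 → MemLp h 2 μ01 →
      (∫ x in I01, g x) = 0 → (∫ x in I01, h x) = 0 →
      |∫ x in I01, ∫ y in I01, f x y * g x * h y| ≤
        (1 - (1 / 2) * ((∫ x in I01, ε₁ x) + (∫ x in I01, ε₂ x))) *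
          Real.sqrt (∫ x in I01, g x ^ 2) * Real.sqrt (∫ x in I01, h x ^ 2) := by
  have hab : (∫ x in I01, ε₁ x) + (∫ x in I01, ε₂ x) ≤ 1 :=
    integral_add_integral_le_one (μ := μ01) (ν := μ01) hf_int hmarg_y hε₁_int hε₂_int hdom
  refine ⟨by linarith, fun g h hg hh hg0 hh0 => ?_⟩
  rw [mul_assoc]
  exact abs_integral_integral_mul_mul_le (μ := μ01) (ν := μ01) hf_int hmarg_x hmarg_y
    hε₁_nonneg hε₂_nonneg hε₁_int hε₂_int hdom hg hh hg0 hh0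

/-- Let `f : [0,1]² → [0,∞)` be integrable with
`∫₀¹ f(x,y) dx = 1` for a.e. `y` and `∫₀¹ f(x,y) dy = 1` for a.e. `x`
(i.e. `f` is a copula density).  Suppose there exist nonnegative integrable
functions `ε₁, ε₂ : [0,1] → [0,∞)` such that `f(x,y) ≥ ε₁(x) + ε₂(y)` for
a.e. `(x,y)`.  Then `∫₀¹ ε₁ + ∫₀¹ ε₂ < 2`, and for all mean-zero
`g, h ∈ L²(0,1)`,
`|∫₀¹∫₀¹ f(x,y) g(x) h(y) dx dy| ≤ (1 − ½(∫₀¹ ε₁ + ∫₀¹ ε₂)) ‖g‖₂ ‖h‖₂`. -/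
theorem copula_density_lower_bound_correlation
    (f : ℝ → ℝ → ℝ) (ε₁ ε₂ : ℝ → ℝ)
    (hf_meas : Measurable (Function.uncurry f))
    (hf_nonneg : ∀ x y, 0 ≤ f x y)
    (hf_int : Integrable (Function.uncurry f) (μ01.prod μ01))
    (hmarg_x : ∀ᵐ y ∂μ01, (∫ x in I01, f x y) = 1)
    (hmarg_y : ∀ᵐ x ∂μ01, (∫ y in I01, f x y) = 1)
    (hε₁_nonneg : ∀ x, 0 ≤ ε₁ x) (hε₂_nonneg : ∀ x, 0 ≤ ε₂ x)
    (hε₁_int : IntegrableOn ε₁ I01) (hε₂_int : IntegrableOn ε₂ I01)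
    (hdom : ∀ᵐ p ∂(μ01.prod μ01), ε₁ p.1 + ε₂ p.2 ≤ f p.1 p.2) :
    (∫ x in I01, ε₁ x) + (∫ x in I01, ε₂ x) < 2 ∧
    ∀ g h : ℝ → ℝ, MemLp g 2 μ01 → MemLp h 2 μ01 →
      (∫ x in I01, g x) = 0 → (∫ x in I01, h x) = 0 →
      |∫ x in I01, ∫ y in I01, f x y * g x * h y| ≤
        (1 - (1 / 2) * ((∫ x in I01, ε₁ x) + (∫ x in I01, ε₂ x))) *
          Real.sqrt (∫ x in I01, g x ^ 2) * Real.sqrt (∫ x in I01, h x ^ 2) :=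
  copula_density_lower_bound_correlation_general f ε₁ ε₂ hf_int hmarg_x hmarg_y hε₁_nonneg
    hε₂_nonneg hε₁_int hε₂_int hdom
end

section
/- Let μ be a probability measure on [0,1]² whose two coordinate marginals both equal Lebesgue measure on [0,1] (a copula measure). Suppose there exist nonnegative integrable functions ε₁, ε₂ : [0,1] → [0,∞) with ε := ∫₀¹ ε₁ + ∫₀¹ ε₂ > 0, such that μ(A) ≥ ∫_A (ε₁(x) + ε₂(y)) dx dy for every measurable A ⊆ [0,1]². Then for all f, g ∈ L²(0,1) that are mean-zero, |∫_{[0,1]²} f(x) g(y) μ(d(x,y))| ≤ (1 − ε/2) ‖f‖₂ ‖g‖₂; in particular the maximal correlation coefficient ρ₁ = sup{∫ f(x)g(y) dμ : ‖f‖₂ = ‖g‖₂ = 1, f, g mean-zero} satisfies ρ₁ ≤ 1 − ε/2 < 1. -/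
/-!
The measure `λ = (ε₁(x) + ε₂(y)) dx dy` lies below `μ`, so `μ = ν + λ` with `ν ≥ 0`.
For mean-zero `f, g` the cross term `∫ f(x) g(y) dλ = ∫ f ε₁ · ∫ g + ∫ f · ∫ g ε₂` vanishes,
while `λ` carries at least the fraction `b = ∫ ε₂` of `‖f‖²` and `a = ∫ ε₁` of `‖g‖²`.
Cauchy–Schwarz on `ν` then gives
`|∫ f(x) g(y) dμ| ≤ √((1 - b)(1 - a)) ‖f‖ ‖g‖ ≤ (1 - (a + b)/2) ‖f‖ ‖g‖`.
-/

open MeasureTheory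

open Measure
open scoped ENNReal

section
variable {α : Type*} [MeasurableSpace α]

theorem abs_integral_mul_le_sqrt_integral_sq_mul {μ : Measure α} {X Y : α → ℝ}
    (hX : MemLp X 2 μ) (hY : MemLp Y 2 μ) :
    |∫ a, X a * Y a ∂μ| ≤ √(∫ a, X a ^ 2 ∂μ) * √(∫ a, Y a ^ 2 ∂μ) := by
  have h := integral_mul_norm_le_Lp_mul_Lq Real.HolderConjugate.two_two
    (by simpa using hX) (by simpa using hY)
  simp only [Real.norm_eq_abs, Real.rpow_two, sq_abs, ← Real.sqrt_eq_rpow] at h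
  calc |∫ a, X a * Y a ∂μ| ≤ ∫ a, |X a| * |Y a| ∂μ := by
        simpa only [abs_mul] using abs_integral_le_integral_abs (f := fun a ↦ X a * Y a)
    _ ≤ _ := h

theorem sqrt_one_sub_mul_sqrt_one_sub_le {a b : ℝ} (ha : a ≤ 1) (hb : b ≤ 1) :
    √(1 - b) * √(1 - a) ≤ 1 - (a + b) / 2 := by
  nlinarith [sq_nonneg (√(1 - b) - √(1 - a)), Real.sq_sqrt (sub_nonneg.2 ha),
    Real.sq_sqrt (sub_nonneg.2 hb)]

theorem abs_integral_mul_le_of_le {μ ν : Measure α} [IsFiniteMeasure ν] (hνμ : ν ≤ μ)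
    {X Y : α → ℝ} (hX : MemLp X 2 μ) (hY : MemLp Y 2 μ) {a b : ℝ}
    (horth : ∫ p, X p * Y p ∂ν = 0)
    (hXν : b * ∫ p, X p ^ 2 ∂μ ≤ ∫ p, X p ^ 2 ∂ν)
    (hYν : a * ∫ p, Y p ^ 2 ∂μ ≤ ∫ p, Y p ^ 2 ∂ν) :
    |∫ p, X p * Y p ∂μ| ≤
      √(1 - b) * √(1 - a) * √(∫ p, X p ^ 2 ∂μ) * √(∫ p, Y p ^ 2 ∂μ) := by
  have split : ∀ F : α → ℝ, Integrable F μ → ∫ p, F p ∂μ = ∫ p, F p ∂(μ - ν) + ∫ p, F p ∂ν :=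
    fun F hF ↦ by
      rw [← integral_add_measure (hF.mono_measure sub_le) (hF.mono_measure hνμ),
        sub_add_cancel_of_le hνμ]
  have hXY : ∫ p, X p * Y p ∂μ = ∫ p, X p * Y p ∂(μ - ν) := by
    rw [split (fun p ↦ X p * Y p) (hX.integrable_mul hY), horth, add_zero]
  have hX' : √(∫ p, X p ^ 2 ∂(μ - ν)) ≤ √(1 - b) * √(∫ p, X p ^ 2 ∂μ) := by
    rw [← Real.sqrt_mul' _ (integral_nonneg fun _ ↦ sq_nonneg _)]
    gcongr
    linarith [split _ hX.integrable_sq]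
  have hY' : √(∫ p, Y p ^ 2 ∂(μ - ν)) ≤ √(1 - a) * √(∫ p, Y p ^ 2 ∂μ) := by
    rw [← Real.sqrt_mul' _ (integral_nonneg fun _ ↦ sq_nonneg _)]
    gcongr
    linarith [split _ hY.integrable_sq]
  calc |∫ p, X p * Y p ∂μ|
      ≤ √(∫ p, X p ^ 2 ∂(μ - ν)) * √(∫ p, Y p ^ 2 ∂(μ - ν)) := hXY ▸
        abs_integral_mul_le_sqrt_integral_sq_mul (hX.mono_measure sub_le) (hY.mono_measure sub_le)
    _ ≤ (√(1 - b) * √(∫ p, X p ^ 2 ∂μ)) * (√(1 - a) * √(∫ p, Y p ^ 2 ∂μ)) := by gcongr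
    _ = _ := by ring

theorem withDensity_restrict_le_of_setLIntegral_le {m μ : Measure α} {S : Set α}
    (hS : MeasurableSet S) {w : α → ℝ≥0∞}
    (h : ∀ A, MeasurableSet A → A ⊆ S → ∫⁻ a in A, w a ∂m ≤ μ A) :
    (m.restrict S).withDensity w ≤ μ :=
  Measure.le_iff.2 fun A hA ↦ by
    rw [withDensity_apply _ hA, Measure.restrict_restrict hA]
    exact (h _ (hA.inter hS) Set.inter_subset_right).trans (measure_mono Set.inter_subset_left)

end

section Prod
variable {α β : Type*} [MeasurableSpace α] [MeasurableSpace β] {μ₁ : Measure α} {μ₂ : Measure β}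

theorem isProbabilityMeasure_of_map_eq [IsProbabilityMeasure μ₂] {μ : Measure α} {f : α → β}
    (h : μ.map f = μ₂) : IsProbabilityMeasure μ := by
  have : IsProbabilityMeasure (μ.map f) := h ▸ ‹_›
  exact isProbabilityMeasure_of_map f

theorem integral_withDensity_ofReal {ε : α → ℝ} (hε : AEMeasurable ε μ₁) (hε0 : 0 ≤ ε)
    (h : α → ℝ) :
    ∫ x, h x ∂μ₁.withDensity (fun x ↦ ENNReal.ofReal (ε x)) = ∫ x, ε x * h x ∂μ₁ := by
  rw [integral_withDensity_eq_integral_toReal_smul₀ hε.ennreal_ofReal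
    (ae_of_all _ fun _ ↦ ENNReal.ofReal_lt_top)]
  simp only [ENNReal.toReal_ofReal (hε0 _), smul_eq_mul]

noncomputable def prodAddDensity (μ₁ : Measure α) (μ₂ : Measure β) (ε₁ : α → ℝ) (ε₂ : β → ℝ) :
    Measure (α × β) :=
  (μ₁.prod μ₂).withDensity fun p ↦ ENNReal.ofReal (ε₁ p.1 + ε₂ p.2)

variable [SFinite μ₂] {ε₁ : α → ℝ} {ε₂ : β → ℝ}

theorem prodAddDensity_eq_add (hε₁ : AEMeasurable ε₁ μ₁) (hε₂ : AEMeasurable ε₂ μ₂)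
    (hε₁0 : 0 ≤ ε₁) (hε₂0 : 0 ≤ ε₂) :
    prodAddDensity μ₁ μ₂ ε₁ ε₂ =
      (μ₁.withDensity fun x ↦ ENNReal.ofReal (ε₁ x)).prod μ₂ +
        μ₁.prod (μ₂.withDensity fun y ↦ ENNReal.ofReal (ε₂ y)) := by
  rw [prodAddDensity, prod_withDensity_left₀ hε₁.ennreal_ofReal,
    prod_withDensity_right₀ hε₂.ennreal_ofReal]
  ext1 s hs
  rw [withDensity_apply _ hs, add_apply, withDensity_apply _ hs, withDensity_apply _ hs,
    ← lintegral_add_left' hε₁.comp_fst.ennreal_ofReal.restrict]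
  simp only [ENNReal.ofReal_add (hε₁0 _) (hε₂0 _)]

theorem integral_mul_prodAddDensity [SFinite μ₁] (hε₁ : AEMeasurable ε₁ μ₁)
    (hε₂ : AEMeasurable ε₂ μ₂) (hε₁0 : 0 ≤ ε₁) (hε₂0 : 0 ≤ ε₂) {f : α → ℝ} {g : β → ℝ}
    (hfg : Integrable (fun p : α × β ↦ f p.1 * g p.2) (prodAddDensity μ₁ μ₂ ε₁ ε₂)) :
    ∫ p, f p.1 * g p.2 ∂prodAddDensity μ₁ μ₂ ε₁ ε₂ =
      (∫ x, ε₁ x * f x ∂μ₁) * ∫ y, g y ∂μ₂ + (∫ x, f x ∂μ₁) * ∫ y, ε₂ y * g y ∂μ₂ := by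
  rw [prodAddDensity_eq_add hε₁ hε₂ hε₁0 hε₂0] at hfg ⊢
  rw [integral_add_measure hfg.left_of_add_measure hfg.right_of_add_measure, integral_prod_mul,
    integral_prod_mul, integral_withDensity_ofReal hε₁ hε₁0, integral_withDensity_ofReal hε₂ hε₂0]

theorem mul_integral_sq_le_integral_sq_fst_prodAddDensity [SFinite μ₁] [IsProbabilityMeasure μ₂]
    (hε₁ : AEMeasurable ε₁ μ₁) (hε₂ : AEMeasurable ε₂ μ₂) (hε₁0 : 0 ≤ ε₁) (hε₂0 : 0 ≤ ε₂) {f : α → ℝ}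
    (hf : Integrable (fun p : α × β ↦ f p.1 ^ 2) (prodAddDensity μ₁ μ₂ ε₁ ε₂)) :
    (∫ y, ε₂ y ∂μ₂) * ∫ x, f x ^ 2 ∂μ₁ ≤ ∫ p, f p.1 ^ 2 ∂prodAddDensity μ₁ μ₂ ε₁ ε₂ := by
  have h := integral_mul_prodAddDensity hε₁ hε₂ hε₁0 hε₂0 (f := fun x ↦ f x ^ 2)
    (g := fun _ ↦ (1 : ℝ)) (by simpa using hf)
  simp only [mul_one, integral_const, probReal_univ, smul_eq_mul] at h
  rw [h]
  linarith [integral_nonneg (μ := μ₁) (f := fun x ↦ ε₁ x * f x ^ 2)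
    fun x ↦ mul_nonneg (hε₁0 x) (sq_nonneg _)]

theorem mul_integral_sq_le_integral_sq_snd_prodAddDensity [IsProbabilityMeasure μ₁]
    (hε₁ : AEMeasurable ε₁ μ₁) (hε₂ : AEMeasurable ε₂ μ₂) (hε₁0 : 0 ≤ ε₁) (hε₂0 : 0 ≤ ε₂) {g : β → ℝ}
    (hg : Integrable (fun p : α × β ↦ g p.2 ^ 2) (prodAddDensity μ₁ μ₂ ε₁ ε₂)) :
    (∫ x, ε₁ x ∂μ₁) * ∫ y, g y ^ 2 ∂μ₂ ≤ ∫ p, g p.2 ^ 2 ∂prodAddDensity μ₁ μ₂ ε₁ ε₂ := by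
  have h := integral_mul_prodAddDensity hε₁ hε₂ hε₁0 hε₂0 (f := fun _ ↦ (1 : ℝ))
    (g := fun y ↦ g y ^ 2) (by simpa using hg)
  simp only [one_mul, mul_one, integral_const, probReal_univ, smul_eq_mul] at h
  rw [h]
  linarith [integral_nonneg (μ := μ₂) (f := fun y ↦ ε₂ y * g y ^ 2)
    fun y ↦ mul_nonneg (hε₂0 y) (sq_nonneg _)]

variable [IsProbabilityMeasure μ₁] [IsProbabilityMeasure μ₂] {μ : Measure (α × β)}

theorem integral_add_integral_le_one_s2 (hμ₁ : μ.map Prod.fst = μ₁)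
    (hε₁ : AEMeasurable ε₁ μ₁) (hε₂ : AEMeasurable ε₂ μ₂) (hε₁0 : 0 ≤ ε₁) (hε₂0 : 0 ≤ ε₂)
    (hle : prodAddDensity μ₁ μ₂ ε₁ ε₂ ≤ μ) :
    ∫ x, ε₁ x ∂μ₁ + ∫ y, ε₂ y ∂μ₂ ≤ 1 := by
  have := isProbabilityMeasure_of_map_eq hμ₁
  have := isFiniteMeasure_of_le μ hle
  have hmass := integral_mul_prodAddDensity hε₁ hε₂ hε₁0 hε₂0 (f := fun _ ↦ (1 : ℝ))
    (g := fun _ ↦ (1 : ℝ)) (by simp)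
  simp only [mul_one, one_mul, integral_const, smul_eq_mul, probReal_univ] at hmass
  rw [← hmass]
  simpa [measureReal_def] using ENNReal.toReal_mono (measure_ne_top μ _) (hle Set.univ)

theorem abs_integral_mul_le_of_prodAddDensity_le (hμ₁ : μ.map Prod.fst = μ₁)
    (hμ₂ : μ.map Prod.snd = μ₂)
    (hε₁ : AEMeasurable ε₁ μ₁) (hε₂ : AEMeasurable ε₂ μ₂) (hε₁0 : 0 ≤ ε₁) (hε₂0 : 0 ≤ ε₂)
    (hle : prodAddDensity μ₁ μ₂ ε₁ ε₂ ≤ μ)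
    {f : α → ℝ} {g : β → ℝ} (hf : MemLp f 2 μ₁) (hg : MemLp g 2 μ₂)
    (hf0 : ∫ x, f x ∂μ₁ = 0) (hg0 : ∫ y, g y ∂μ₂ = 0) :
    |∫ p, f p.1 * g p.2 ∂μ| ≤ (1 - (∫ x, ε₁ x ∂μ₁ + ∫ y, ε₂ y ∂μ₂) / 2) *
      √(∫ x, f x ^ 2 ∂μ₁) * √(∫ y, g y ^ 2 ∂μ₂) := by
  have hsum := integral_add_integral_le_one_s2 hμ₁ hε₁ hε₂ hε₁0 hε₂0 hle
  have ha : 0 ≤ ∫ x, ε₁ x ∂μ₁ := integral_nonneg hε₁0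
  have hb : 0 ≤ ∫ y, ε₂ y ∂μ₂ := integral_nonneg hε₂0
  have := isProbabilityMeasure_of_map_eq hμ₁
  have := isFiniteMeasure_of_le μ hle
  have hX : MemLp (fun p : α × β ↦ f p.1) 2 μ := hf.comp_measurePreserving ⟨measurable_fst, hμ₁⟩
  have hY : MemLp (fun p : α × β ↦ g p.2) 2 μ := hg.comp_measurePreserving ⟨measurable_snd, hμ₂⟩
  have hXμ : ∫ p, f p.1 ^ 2 ∂μ = ∫ x, f x ^ 2 ∂μ₁ := by
    rw [← hμ₁, integral_map measurable_fst.aemeasurable (hμ₁ ▸ hf.integrable_sq.1)]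
  have hYμ : ∫ p, g p.2 ^ 2 ∂μ = ∫ y, g y ^ 2 ∂μ₂ := by
    rw [← hμ₂, integral_map measurable_snd.aemeasurable (hμ₂ ▸ hg.integrable_sq.1)]
  have horth : ∫ p, f p.1 * g p.2 ∂prodAddDensity μ₁ μ₂ ε₁ ε₂ = 0 := by
    rw [integral_mul_prodAddDensity hε₁ hε₂ hε₁0 hε₂0 ((hX.integrable_mul hY).mono_measure hle),
      hf0, hg0, mul_zero, zero_mul, add_zero]
  have hXν := hXμ ▸ mul_integral_sq_le_integral_sq_fst_prodAddDensity hε₁ hε₂ hε₁0 hε₂0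
    (hX.integrable_sq.mono_measure hle)
  have hYν := hYμ ▸ mul_integral_sq_le_integral_sq_snd_prodAddDensity hε₁ hε₂ hε₁0 hε₂0
    (hY.integrable_sq.mono_measure hle)
  calc |∫ p, f p.1 * g p.2 ∂μ|
      ≤ √(1 - ∫ y, ε₂ y ∂μ₂) * √(1 - ∫ x, ε₁ x ∂μ₁) *
          √(∫ p, f p.1 ^ 2 ∂μ) * √(∫ p, g p.2 ^ 2 ∂μ) :=
        abs_integral_mul_le_of_le hle hX hY horth hXν hYν
    _ ≤ _ := by
      rw [hXμ, hYμ]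
      gcongr
      exact sqrt_one_sub_mul_sqrt_one_sub_le (by linarith) (by linarith)

end Prod

instance inst_s2 : IsProbabilityMeasure μ01 :=
  ⟨by simp [μ01, I01, Real.volume_Icc]⟩

theorem volume_restrict_I01_prod :
    (volume : Measure (ℝ × ℝ)).restrict (I01 ×ˢ I01) = μ01.prod μ01 := by
  rw [μ01, Measure.prod_restrict, ← Measure.volume_eq_prod]

theorem copula_measure_lower_bound_maximal_correlation_general
    (μ : Measure (ℝ × ℝ))
    (hmarg1 : μ.map Prod.fst = μ01)
    (hmarg2 : μ.map Prod.snd = μ01)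
    (ε₁ ε₂ : ℝ → ℝ)
    (hε₁_nonneg : ∀ x, 0 ≤ ε₁ x) (hε₂_nonneg : ∀ x, 0 ≤ ε₂ x)
    (hε₁_int : IntegrableOn ε₁ I01) (hε₂_int : IntegrableOn ε₂ I01)
    (hε_pos : 0 < (∫ x in I01, ε₁ x) + (∫ x in I01, ε₂ x))
    (hdom : ∀ A : Set (ℝ × ℝ), MeasurableSet A → A ⊆ I01 ×ˢ I01 →
      (∫⁻ p in A, ENNReal.ofReal (ε₁ p.1 + ε₂ p.2)) ≤ μ A) :
    (∀ f g : ℝ → ℝ, MemLp f 2 μ01 → MemLp g 2 μ01 →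
      (∫ x in I01, f x) = 0 → (∫ x in I01, g x) = 0 →
      |∫ p, f p.1 * g p.2 ∂μ| ≤
        (1 - ((∫ x in I01, ε₁ x) + (∫ x in I01, ε₂ x)) / 2) *
          Real.sqrt (∫ x in I01, f x ^ 2) * Real.sqrt (∫ x in I01, g x ^ 2)) ∧
    sSup {r : ℝ | ∃ f g : ℝ → ℝ, MemLp f 2 μ01 ∧ MemLp g 2 μ01 ∧
        (∫ x in I01, f x) = 0 ∧ (∫ x in I01, g x) = 0 ∧
        (∫ x in I01, f x ^ 2) = 1 ∧ (∫ x in I01, g x ^ 2) = 1 ∧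
        r = ∫ p, f p.1 * g p.2 ∂μ} ≤
      1 - ((∫ x in I01, ε₁ x) + (∫ x in I01, ε₂ x)) / 2 ∧
    1 - ((∫ x in I01, ε₁ x) + (∫ x in I01, ε₂ x)) / 2 < 1 := by
  have hle : prodAddDensity μ01 μ01 ε₁ ε₂ ≤ μ := by
    rw [prodAddDensity, ← volume_restrict_I01_prod]
    exact withDensity_restrict_le_of_setLIntegral_le (measurableSet_Icc.prod measurableSet_Icc) hdom
  have hε₁ : AEMeasurable ε₁ μ01 := hε₁_int.aemeasurable
  have hε₂ : AEMeasurable ε₂ μ01 := hε₂_int.aemeasurable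
  have hcorr := fun f g (hf : MemLp f 2 μ01) (hg : MemLp g 2 μ01) hf0 hg0 ↦
    abs_integral_mul_le_of_prodAddDensity_le hmarg1 hmarg2 hε₁ hε₂ hε₁_nonneg hε₂_nonneg hle
      hf hg hf0 hg0
  have hsum := integral_add_integral_le_one_s2 hmarg1 hε₁ hε₂ hε₁_nonneg hε₂_nonneg hle
  simp only [μ01] at hcorr hsum
  refine ⟨hcorr, Real.sSup_le ?_ (by linarith), by linarith⟩
  rintro r ⟨f, g, hf, hg, hf0, hg0, hf1, hg1, rfl⟩
  have h := hcorr f g hf hg hf0 hg0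
  rw [hf1, hg1, Real.sqrt_one, mul_one, mul_one] at h
  exact (le_abs_self _).trans h

/-- Let `μ` be a probability measure on `[0,1]²` whose two
coordinate marginals both equal Lebesgue measure on `[0,1]` (a copula measure).
Suppose there exist nonnegative integrable functions `ε₁, ε₂` with
`ε := ∫₀¹ ε₁ + ∫₀¹ ε₂ > 0` such that `μ(A) ≥ ∫_A (ε₁(x) + ε₂(y)) dx dy` for
every measurable `A ⊆ [0,1]²`.  Then for all mean-zero `f, g ∈ L²(0,1)`,
`|∫ f(x) g(y) μ(d(x,y))| ≤ (1 − ε/2) ‖f‖₂ ‖g‖₂`; in particular the maximal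
correlation coefficient `ρ₁` satisfies `ρ₁ ≤ 1 − ε/2 < 1`. -/
theorem copula_measure_lower_bound_maximal_correlation
    (μ : Measure (ℝ × ℝ)) [IsProbabilityMeasure μ]
    (hsupp : μ (I01 ×ˢ I01) = 1)
    (hmarg1 : μ.map Prod.fst = μ01)
    (hmarg2 : μ.map Prod.snd = μ01)
    (ε₁ ε₂ : ℝ → ℝ)
    (hε₁_nonneg : ∀ x, 0 ≤ ε₁ x) (hε₂_nonneg : ∀ x, 0 ≤ ε₂ x)
    (hε₁_int : IntegrableOn ε₁ I01) (hε₂_int : IntegrableOn ε₂ I01)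
    (hε_pos : 0 < (∫ x in I01, ε₁ x) + (∫ x in I01, ε₂ x))
    (hdom : ∀ A : Set (ℝ × ℝ), MeasurableSet A → A ⊆ I01 ×ˢ I01 →
      (∫⁻ p in A, ENNReal.ofReal (ε₁ p.1 + ε₂ p.2)) ≤ μ A) :
    (∀ f g : ℝ → ℝ, MemLp f 2 μ01 → MemLp g 2 μ01 →
      (∫ x in I01, f x) = 0 → (∫ x in I01, g x) = 0 →
      |∫ p, f p.1 * g p.2 ∂μ| ≤
        (1 - ((∫ x in I01, ε₁ x) + (∫ x in I01, ε₂ x)) / 2) *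
          Real.sqrt (∫ x in I01, f x ^ 2) * Real.sqrt (∫ x in I01, g x ^ 2)) ∧
    sSup {r : ℝ | ∃ f g : ℝ → ℝ, MemLp f 2 μ01 ∧ MemLp g 2 μ01 ∧
        (∫ x in I01, f x) = 0 ∧ (∫ x in I01, g x) = 0 ∧
        (∫ x in I01, f x ^ 2) = 1 ∧ (∫ x in I01, g x ^ 2) = 1 ∧
        r = ∫ p, f p.1 * g p.2 ∂μ} ≤
      1 - ((∫ x in I01, ε₁ x) + (∫ x in I01, ε₂ x)) / 2 ∧
    1 - ((∫ x in I01, ε₁ x) + (∫ x in I01, ε₂ x)) / 2 < 1 :=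
  copula_measure_lower_bound_maximal_correlation_general μ hmarg1 hmarg2 ε₁ ε₂ hε₁_nonneg hε₂_nonneg
    hε₁_int hε₂_int hε_pos hdom
end

section
/- Let c be a copula density on [0,1]² such that for every x the map y ↦ c(x,y) is continuously differentiable on [0,1], the function x ↦ c(x,1) − c(x,0) is in L²(0,1), and the function x ↦ ∫₀¹ |∂₂c(x,y)| dy is in L²(0,1). Set k₁ = ∫₀¹ (∫₀¹ |∂₂c(x,y)| dy)² dx and k₂ = ∫₀¹ (|c(x,1) − c(x,0)| + ∫₀¹ |∂₂c(x,y)| dy)² dx. Then for every mean-zero f ∈ L²(0,1), ∫₀¹ (∫₀¹ c(x,y) f(y) dy)² dx ≤ ((k₁ + k₂)/12) ∫₀¹ f². In particular, if k₁ + k₂ < 12 then the maximal correlation coefficient ρ₁ = sup{∫₀¹∫₀¹ c(x,y) f(x) g(y) dx dy : ‖f‖₂ = ‖g‖₂ = 1, f, g mean-zero} satisfies ρ₁ ≤ √((k₁+k₂)/12) < 1. -/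
open MeasureTheory

/-!
For fixed `x`, the section `h = c(x, ·)` stays within `(V + |h 1 - h 0|) / 4` of the midpoint `κ`
of its range, where `V = ∫₀¹ |h'|`: following `h` from `0` through its maximum and minimum points
to `1` covers the range twice, at total cost `V`, up to the net displacement `h 1 - h 0`.
Since `f` has mean zero, `∫ h f = ∫ (h - κ) f`, and Cauchy–Schwarz bounds its square by
`((V + |h 1 - h 0|) / 4)² ∫ f²`, which is at most the integrand of `(k₁ + k₂) / 12`.
Integrating in `x` gives the first claim; the bound on `ρ₁` follows from it by Cauchy–Schwarz
in `x`.
-/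

open Set

instance : IsProbabilityMeasure (volume.restrict I01) :=
  ⟨by simp [I01, Real.volume_Icc]⟩

section CauchySchwarz

variable {α : Type*} [MeasurableSpace α] {μ : Measure α}

theorem sq_integral_mul_le_integral_sq_mul_integral_sq {f g : α → ℝ} (hf : MemLp f 2 μ)
    (hg : MemLp g 2 μ) :
    (∫ x, f x * g x ∂μ) ^ 2 ≤ (∫ x, f x ^ 2 ∂μ) * ∫ x, g x ^ 2 ∂μ := by
  have hf2 := hf.integrable_sq
  have hg2 := hg.integrable_sq
  have hfg : Integrable (fun x => f x * g x) μ := hf.integrable_mul hg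
  have hquad : ∀ t : ℝ, 0 ≤ (∫ x, f x ^ 2 ∂μ) * (t * t) + 2 * (∫ x, f x * g x ∂μ) * t +
      ∫ x, g x ^ 2 ∂μ := fun t =>
    calc 0 ≤ ∫ x, (t * f x + g x) ^ 2 ∂μ := integral_nonneg fun _ => sq_nonneg _
      _ = ∫ x, (t * t * f x ^ 2 + (2 * t * (f x * g x) + g x ^ 2)) ∂μ := by
          congr 1; funext x; ring
      _ = _ := by
          rw [integral_add (hf2.const_mul _) ?_, integral_add (hfg.const_mul _) hg2,
            integral_const_mul, integral_const_mul]
          · ring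
          · exact (hfg.const_mul _).add hg2
  have hdiscr := discrim_le_zero hquad
  rw [discrim] at hdiscr
  linarith

theorem sq_integral_mul_le_of_abs_sub_le [IsProbabilityMeasure μ] {φ f : α → ℝ} {κ B : ℝ}
    (hφ : AEStronglyMeasurable φ μ) (hφB : ∀ᵐ x ∂μ, |φ x - κ| ≤ B) (hf : MemLp f 2 μ)
    (hf0 : ∫ x, f x ∂μ = 0) :
    (∫ x, φ x * f x ∂μ) ^ 2 ≤ B ^ 2 * ∫ x, f x ^ 2 ∂μ := by
  have hψ : MemLp (fun x => φ x - κ) 2 μ :=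
    .of_bound (hφ.sub aestronglyMeasurable_const) B (by simpa only [Real.norm_eq_abs] using hφB)
  have hφf : Integrable (fun x => φ x * f x) μ := by
    have hφ2 : MemLp φ 2 μ := by
      convert hψ.add (memLp_const κ) using 1
      ext x; simp
    exact hφ2.integrable_mul hf
  have hshift : ∫ x, φ x * f x ∂μ = ∫ x, (φ x - κ) * f x ∂μ := by
    simp_rw [sub_mul]
    rw [integral_sub hφf ((hf.integrable one_le_two).const_mul κ),
      integral_const_mul, hf0, mul_zero, sub_zero]
  have hψsq : ∫ x, (φ x - κ) ^ 2 ∂μ ≤ B ^ 2 := by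
    have hmono : ∫ x, (φ x - κ) ^ 2 ∂μ ≤ ∫ _, B ^ 2 ∂μ :=
      integral_mono_of_nonneg (ae_of_all _ fun _ => sq_nonneg _) (integrable_const _)
        (hφB.mono fun x hx => by simpa only [sq_abs] using pow_le_pow_left₀ (abs_nonneg _) hx 2)
    simpa using hmono
  calc (∫ x, φ x * f x ∂μ) ^ 2
      ≤ (∫ x, (φ x - κ) ^ 2 ∂μ) * ∫ x, f x ^ 2 ∂μ := by
        rw [hshift]; exact sq_integral_mul_le_integral_sq_mul_integral_sq hψ hf
    _ ≤ B ^ 2 * ∫ x, f x ^ 2 ∂μ :=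
        mul_le_mul_of_nonneg_right hψsq (integral_nonneg fun _ => sq_nonneg _)

end CauchySchwarz

section Oscillation

variable {h h' : ℝ → ℝ} {a b : ℝ}

theorem abs_sub_le_integral_abs_deriv (hd : ∀ y ∈ Icc a b, HasDerivWithinAt h (h' y) (Icc a b) y)
    (hint : IntegrableOn h' (Icc a b)) {u v : ℝ} (hau : a ≤ u) (huv : u ≤ v) (hvb : v ≤ b) :
    |h v - h u| ≤ ∫ y in u..v, |h' y| := by
  have hsub : Icc u v ⊆ Icc a b := Icc_subset_Icc hau hvb
  have hftc : ∫ y in u..v, h' y = h v - h u := by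
    refine intervalIntegral.integral_eq_sub_of_hasDeriv_right_of_le huv
      (fun y hy => (hd y (hsub hy)).continuousWithinAt.mono hsub) (fun y hy => ?_)
      ((intervalIntegrable_iff_integrableOn_Icc_of_le huv).2 (hint.mono_set hsub))
    have hy : y ∈ Ioo a b := ⟨hau.trans_lt hy.1, hy.2.trans_le hvb⟩
    exact ((hd y (Ioo_subset_Icc_self hy)).hasDerivAt (Icc_mem_nhds hy.1 hy.2)).hasDerivWithinAt
  rw [← hftc]
  exact intervalIntegral.abs_integral_le_integral_abs huv

theorem abs_sub_add_abs_sub_add_abs_sub_le_integral_abs_deriv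
    (hd : ∀ y ∈ Icc a b, HasDerivWithinAt h (h' y) (Icc a b) y) (hint : IntegrableOn h' (Icc a b))
    {u v : ℝ} (hau : a ≤ u) (huv : u ≤ v) (hvb : v ≤ b) :
    |h u - h a| + |h v - h u| + |h b - h v| ≤ ∫ y in a..b, |h' y| := by
  have hI : ∀ {p q : ℝ}, a ≤ p → p ≤ q → q ≤ b →
      IntervalIntegrable (fun y => |h' y|) volume p q := fun hap hpq hqb =>
    (intervalIntegrable_iff_integrableOn_Icc_of_le hpq).2
      (hint.mono_set (Icc_subset_Icc hap hqb)).abs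
  have hav := hau.trans huv
  rw [← intervalIntegral.integral_add_adjacent_intervals (hI le_rfl hav hvb) (hI hav hvb le_rfl),
    ← intervalIntegral.integral_add_adjacent_intervals (hI le_rfl hau (huv.trans hvb))
      (hI hau huv hvb)]
  linarith [abs_sub_le_integral_abs_deriv hd hint le_rfl hau (huv.trans hvb),
    abs_sub_le_integral_abs_deriv hd hint hau huv hvb,
    abs_sub_le_integral_abs_deriv hd hint hav hvb le_rfl]

theorem exists_abs_sub_le_of_hasDerivWithinAt
    (hd : ∀ y ∈ Icc a b, HasDerivWithinAt h (h' y) (Icc a b) y) (hint : IntegrableOn h' (Icc a b))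
    (hab : a ≤ b) :
    ∃ κ, ∀ y ∈ Icc a b, |h y - κ| ≤ ((∫ y in a..b, |h' y|) + |h b - h a|) / 4 := by
  have hcont : ContinuousOn h (Icc a b) := fun y hy => (hd y hy).continuousWithinAt
  obtain ⟨s, hs, hsmax⟩ := isCompact_Icc.exists_isMaxOn (nonempty_Icc.2 hab) hcont
  obtain ⟨t, ht, htmin⟩ := isCompact_Icc.exists_isMinOn (nonempty_Icc.2 hab) hcont
  have hosc : 2 * (h s - h t) ≤ (∫ y in a..b, |h' y|) + |h b - h a| := by
    rcases le_total s t with hst | hts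
    · have := abs_sub_add_abs_sub_add_abs_sub_le_integral_abs_deriv hd hint hs.1 hst ht.2
      linarith [le_abs_self (h s - h a), neg_le_abs (h t - h s), le_abs_self (h b - h t),
        neg_le_abs (h b - h a)]
    · have := abs_sub_add_abs_sub_add_abs_sub_le_integral_abs_deriv hd hint ht.1 hts hs.2
      linarith [neg_le_abs (h t - h a), le_abs_self (h s - h t), neg_le_abs (h b - h s),
        le_abs_self (h b - h a)]
  refine ⟨(h s + h t) / 2, fun y hy => abs_le.2 ⟨?_, ?_⟩⟩
  · have : h t ≤ h y := htmin hy
    linarith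
  · have : h y ≤ h s := hsmax hy
    linarith

end Oscillation

theorem sq_integral_mul_le_of_hasDerivWithinAt {h h' f : ℝ → ℝ}
    (hd : ∀ y ∈ I01, HasDerivWithinAt h (h' y) I01 y) (hc : ContinuousOn h' I01)
    (hf : MemLp f 2 μ01) (hf0 : ∫ y in I01, f y = 0) :
    (∫ y in I01, h y * f y) ^ 2 ≤
      (((∫ y in I01, |h' y|) + |h 1 - h 0|) / 4) ^ 2 * ∫ y in I01, f y ^ 2 := by
  obtain ⟨κ, hκ⟩ := exists_abs_sub_le_of_hasDerivWithinAt hd hc.integrableOn_Icc zero_le_one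
  rw [intervalIntegral.integral_of_le zero_le_one, ← integral_Icc_eq_integral_Ioc] at hκ
  exact sq_integral_mul_le_of_abs_sub_le
    (ContinuousOn.aestronglyMeasurable (fun y hy => (hd y hy).continuousWithinAt)
      measurableSet_Icc) (ae_restrict_of_forall_mem measurableSet_Icc hκ) hf hf0

section Copula

variable {c c₂ : ℝ → ℝ → ℝ}

theorem ae_sq_integral_mul_le
    (hderiv : ∀ x ∈ I01, ∀ y ∈ I01, HasDerivWithinAt (c x) (c₂ x y) I01 y)
    (hderiv_cont : ∀ x ∈ I01, ContinuousOn (c₂ x) I01) {f : ℝ → ℝ} (hf : MemLp f 2 μ01)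
    (hf0 : ∫ y in I01, f y = 0) :
    ∀ᵐ x ∂μ01, (∫ y in I01, c x y * f y) ^ 2 ≤
      (((∫ y in I01, |c₂ x y|) + |c x 1 - c x 0|) / 4) ^ 2 * ∫ y in I01, f y ^ 2 :=
  ae_restrict_of_forall_mem measurableSet_Icc fun x hx =>
    sq_integral_mul_le_of_hasDerivWithinAt (hderiv x hx) (hderiv_cont x hx) hf hf0

theorem integral_sq_integral_mul_le
    (hderiv : ∀ x ∈ I01, ∀ y ∈ I01, HasDerivWithinAt (c x) (c₂ x y) I01 y)
    (hderiv_cont : ∀ x ∈ I01, ContinuousOn (c₂ x) I01)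
    (hL2_bd : MemLp (fun x => c x 1 - c x 0) 2 μ01)
    (hL2_int : MemLp (fun x => ∫ y in I01, |c₂ x y|) 2 μ01) {f : ℝ → ℝ} (hf : MemLp f 2 μ01)
    (hf0 : ∫ y in I01, f y = 0) :
    (∫ x in I01, (∫ y in I01, c x y * f y) ^ 2) ≤
      (((∫ x in I01, (∫ y in I01, |c₂ x y|) ^ 2) +
          (∫ x in I01, (|c x 1 - c x 0| + ∫ y in I01, |c₂ x y|) ^ 2)) / 12) *
        ∫ x in I01, f x ^ 2 := by
  have hk₁ : Integrable (fun x => (∫ y in I01, |c₂ x y|) ^ 2) (volume.restrict I01) :=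
    hL2_int.integrable_sq
  have hk₂ : Integrable (fun x => (|c x 1 - c x 0| + ∫ y in I01, |c₂ x y|) ^ 2)
      (volume.restrict I01) := (hL2_bd.norm.add hL2_int).integrable_sq
  calc (∫ x in I01, (∫ y in I01, c x y * f y) ^ 2)
      ≤ ∫ x in I01, ((∫ y in I01, |c₂ x y|) ^ 2 +
          (|c x 1 - c x 0| + ∫ y in I01, |c₂ x y|) ^ 2) / 12 * ∫ y in I01, f y ^ 2 := by
        refine integral_mono_of_nonneg (ae_of_all _ fun _ => sq_nonneg _)
          (((hk₁.add hk₂).div_const 12).mul_const _) ?_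
        filter_upwards [ae_sq_integral_mul_le hderiv hderiv_cont hf hf0] with x hx
        refine hx.trans (mul_le_mul_of_nonneg_right ?_ (integral_nonneg fun _ => sq_nonneg _))
        nlinarith [sq_nonneg (∫ y in I01, |c₂ x y|),
          sq_nonneg (|c x 1 - c x 0| + ∫ y in I01, |c₂ x y|)]
    _ = _ := by rw [integral_mul_const, integral_div, integral_add hk₁ hk₂]

theorem memLp_integral_mul_of_integral_sq_eq_one (hc_meas : Measurable (Function.uncurry c))
    (hderiv : ∀ x ∈ I01, ∀ y ∈ I01, HasDerivWithinAt (c x) (c₂ x y) I01 y)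
    (hderiv_cont : ∀ x ∈ I01, ContinuousOn (c₂ x) I01)
    (hL2_bd : MemLp (fun x => c x 1 - c x 0) 2 μ01)
    (hL2_int : MemLp (fun x => ∫ y in I01, |c₂ x y|) 2 μ01) {g : ℝ → ℝ} (hg : MemLp g 2 μ01)
    (hg0 : ∫ y in I01, g y = 0) (hg1 : ∫ y in I01, g y ^ 2 = 1) :
    MemLp (fun x => ∫ y in I01, c x y * g y) 2 μ01 := by
  have hB : MemLp (fun x => ((∫ y in I01, |c₂ x y|) + |c x 1 - c x 0|) / 4) 2 μ01 :=
    (hL2_int.add hL2_bd.norm).mul_const 4⁻¹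
  have hgν : AEMeasurable g (volume.restrict I01) := hg.1.aemeasurable
  refine hB.of_le
    ((hc_meas.aemeasurable.mul hgν.comp_snd).aestronglyMeasurable.integral_prod_right') ?_
  filter_upwards [ae_sq_integral_mul_le hderiv hderiv_cont hg hg0] with x hx
  rw [hg1, mul_one] at hx
  simpa only [Real.norm_eq_abs] using sq_le_sq.1 hx

theorem sq_integral_integral_mul_mul_le (hc_meas : Measurable (Function.uncurry c))
    (hderiv : ∀ x ∈ I01, ∀ y ∈ I01, HasDerivWithinAt (c x) (c₂ x y) I01 y)
    (hderiv_cont : ∀ x ∈ I01, ContinuousOn (c₂ x) I01)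
    (hL2_bd : MemLp (fun x => c x 1 - c x 0) 2 μ01)
    (hL2_int : MemLp (fun x => ∫ y in I01, |c₂ x y|) 2 μ01) {f g : ℝ → ℝ} (hf : MemLp f 2 μ01)
    (hg : MemLp g 2 μ01) (hg0 : ∫ y in I01, g y = 0) (hf1 : ∫ x in I01, f x ^ 2 = 1)
    (hg1 : ∫ y in I01, g y ^ 2 = 1) :
    (∫ x in I01, ∫ y in I01, c x y * f x * g y) ^ 2 ≤
      ((∫ x in I01, (∫ y in I01, |c₂ x y|) ^ 2) +
        (∫ x in I01, (|c x 1 - c x 0| + ∫ y in I01, |c₂ x y|) ^ 2)) / 12 := by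
  have hG := memLp_integral_mul_of_integral_sq_eq_one hc_meas hderiv hderiv_cont hL2_bd hL2_int
    hg hg0 hg1
  calc (∫ x in I01, ∫ y in I01, c x y * f x * g y) ^ 2
      = (∫ x in I01, f x * ∫ y in I01, c x y * g y) ^ 2 := by
        simp_rw [mul_comm (c _ _) (f _), mul_assoc, integral_const_mul]
    _ ≤ (∫ x in I01, f x ^ 2) * ∫ x in I01, (∫ y in I01, c x y * g y) ^ 2 :=
        sq_integral_mul_le_integral_sq_mul_integral_sq hf hG
    _ ≤ _ := by
        rw [hf1, one_mul]
        simpa only [hg1, mul_one] using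
          integral_sq_integral_mul_le hderiv hderiv_cont hL2_bd hL2_int hg hg0

end Copula

theorem copula_density_deriv_rho_bound_general
    (c c₂ : ℝ → ℝ → ℝ)
    (hc_meas : Measurable (Function.uncurry c))
    (hderiv : ∀ x ∈ I01, ∀ y ∈ I01, HasDerivWithinAt (c x) (c₂ x y) I01 y)
    (hderiv_cont : ∀ x ∈ I01, ContinuousOn (c₂ x) I01)
    (hL2_bd : MemLp (fun x => c x 1 - c x 0) 2 μ01)
    (hL2_int : MemLp (fun x => ∫ y in I01, |c₂ x y|) 2 μ01) :
    (∀ f : ℝ → ℝ, MemLp f 2 μ01 → (∫ x in I01, f x) = 0 →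
      (∫ x in I01, (∫ y in I01, c x y * f y) ^ 2) ≤
        (((∫ x in I01, (∫ y in I01, |c₂ x y|) ^ 2) +
            (∫ x in I01, (|c x 1 - c x 0| + ∫ y in I01, |c₂ x y|) ^ 2)) / 12) *
          (∫ x in I01, f x ^ 2)) ∧
    ((∫ x in I01, (∫ y in I01, |c₂ x y|) ^ 2) +
        (∫ x in I01, (|c x 1 - c x 0| + ∫ y in I01, |c₂ x y|) ^ 2) < 12 →
      sSup {r : ℝ | ∃ f g : ℝ → ℝ, MemLp f 2 μ01 ∧ MemLp g 2 μ01 ∧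
            (∫ x in I01, f x) = 0 ∧ (∫ x in I01, g x) = 0 ∧
            (∫ x in I01, f x ^ 2) = 1 ∧ (∫ x in I01, g x ^ 2) = 1 ∧
            r = ∫ x in I01, ∫ y in I01, c x y * f x * g y} ≤
          Real.sqrt (((∫ x in I01, (∫ y in I01, |c₂ x y|) ^ 2) +
            (∫ x in I01, (|c x 1 - c x 0| + ∫ y in I01, |c₂ x y|) ^ 2)) / 12) ∧
      Real.sqrt (((∫ x in I01, (∫ y in I01, |c₂ x y|) ^ 2) +
        (∫ x in I01, (|c x 1 - c x 0| + ∫ y in I01, |c₂ x y|) ^ 2)) / 12) < 1) := by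
  refine ⟨fun f hf hf0 => integral_sq_integral_mul_le hderiv hderiv_cont hL2_bd hL2_int hf hf0,
    fun hlt => ⟨Real.sSup_le ?_ (Real.sqrt_nonneg _), ?_⟩⟩
  · rintro r ⟨f, g, hf, hg, -, hg0, hf1, hg1, rfl⟩
    exact (le_abs_self _).trans <| Real.abs_le_sqrt <|
      sq_integral_integral_mul_mul_le hc_meas hderiv hderiv_cont hL2_bd hL2_int hf hg hg0 hf1 hg1
  · rw [Real.sqrt_lt' one_pos]
    linarith

/-- Let `c` be a copula density on `[0,1]²` such that for every
`x` the map `y ↦ c(x,y)` is continuously differentiable on `[0,1]` (with partial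
derivative `c₂`), `x ↦ c(x,1) − c(x,0)` is in `L²(0,1)`, and
`x ↦ ∫₀¹ |∂₂c(x,y)| dy` is in `L²(0,1)`.  With
`k₁ = ∫₀¹ (∫₀¹ |∂₂c(x,y)| dy)² dx` and
`k₂ = ∫₀¹ (|c(x,1) − c(x,0)| + ∫₀¹ |∂₂c(x,y)| dy)² dx`,
for every mean-zero `f ∈ L²(0,1)` one has
`∫₀¹ (∫₀¹ c(x,y) f(y) dy)² dx ≤ ((k₁ + k₂)/12) ∫₀¹ f²`; in particular, if
`k₁ + k₂ < 12` then the maximal correlation coefficient satisfies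
`ρ₁ ≤ √((k₁+k₂)/12) < 1`. -/
theorem copula_density_deriv_rho_bound
    (c c₂ : ℝ → ℝ → ℝ)
    (hc_meas : Measurable (Function.uncurry c))
    (hc_nonneg : ∀ x y, 0 ≤ c x y)
    (hmarg_x : ∀ᵐ y ∂μ01, (∫ x in I01, c x y) = 1)
    (hmarg_y : ∀ᵐ x ∂μ01, (∫ y in I01, c x y) = 1)
    (hderiv : ∀ x ∈ I01, ∀ y ∈ I01, HasDerivWithinAt (c x) (c₂ x y) I01 y)
    (hderiv_cont : ∀ x ∈ I01, ContinuousOn (c₂ x) I01)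
    (hL2_bd : MemLp (fun x => c x 1 - c x 0) 2 μ01)
    (hL2_int : MemLp (fun x => ∫ y in I01, |c₂ x y|) 2 μ01) :
    (∀ f : ℝ → ℝ, MemLp f 2 μ01 → (∫ x in I01, f x) = 0 →
      (∫ x in I01, (∫ y in I01, c x y * f y) ^ 2) ≤
        (((∫ x in I01, (∫ y in I01, |c₂ x y|) ^ 2) +
            (∫ x in I01, (|c x 1 - c x 0| + ∫ y in I01, |c₂ x y|) ^ 2)) / 12) *
          (∫ x in I01, f x ^ 2)) ∧
    ((∫ x in I01, (∫ y in I01, |c₂ x y|) ^ 2) +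
        (∫ x in I01, (|c x 1 - c x 0| + ∫ y in I01, |c₂ x y|) ^ 2) < 12 →
      sSup {r : ℝ | ∃ f g : ℝ → ℝ, MemLp f 2 μ01 ∧ MemLp g 2 μ01 ∧
            (∫ x in I01, f x) = 0 ∧ (∫ x in I01, g x) = 0 ∧
            (∫ x in I01, f x ^ 2) = 1 ∧ (∫ x in I01, g x ^ 2) = 1 ∧
            r = ∫ x in I01, ∫ y in I01, c x y * f x * g y} ≤
          Real.sqrt (((∫ x in I01, (∫ y in I01, |c₂ x y|) ^ 2) +
            (∫ x in I01, (|c x 1 - c x 0| + ∫ y in I01, |c₂ x y|) ^ 2)) / 12) ∧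
      Real.sqrt (((∫ x in I01, (∫ y in I01, |c₂ x y|) ^ 2) +
        (∫ x in I01, (|c x 1 - c x 0| + ∫ y in I01, |c₂ x y|) ^ 2)) / 12) < 1) :=
  copula_density_deriv_rho_bound_general c c₂ hc_meas hderiv hderiv_cont hL2_bd hL2_int
end

section
/- Let a ∈ (0,1] and define, for x ∈ (0,1] and y ∈ [0,1], c(x,y) = (3·2^{a−2} + 1 + (1/2 − y) x^{1/a − 1} sign(1/2 − x^{1/a})) / (1 + 3·2^{a−2}). Then c is a copula density, and c(x,y) ≥ (3·2^{a−2} + 1/2)/(1 + 3·2^{a−2}) > 0 for all x ∈ (0,1], y ∈ [0,1], i.e. c is bounded away from zero. -/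
open MeasureTheory

/-- The density
`c(x,y) = (3·2^(a−2) + 1 + (1/2 − y)·x^(1/a − 1)·sign(1/2 − x^(1/a))) / (1 + 3·2^(a−2))`. -/
noncomputable def c9 (a x y : ℝ) : ℝ :=
  (3 * (2 : ℝ) ^ (a - 2) + 1 +
      (1 / 2 - y) * x ^ (1 / a - 1) * Real.sign (1 / 2 - x ^ (1 / a))) /
    (1 + 3 * (2 : ℝ) ^ (a - 2))

/-! The factor `x ^ (1/a - 1) * sign (1/2 - x ^ (1/a))` is, off the single point
`x = 2 ^ (-a)`, the derivative of `-a |1/2 - x ^ (1/a)|`, which takes the same value `-a/2` at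
`x = 0` and `x = 1`; so it integrates to zero over `[0,1]`, as does `1/2 - y`. Hence both marginals
of `c` are `(1 + 3·2^(a-2)) / (1 + 3·2^(a-2)) = 1`. For `a ≤ 1` the exponent `1/a - 1` is
nonnegative, so on the unit square the perturbation term has absolute value at most `1/2`. -/

open Set

namespace Real

@[fun_prop]
lemma measurable_sign : Measurable Real.sign :=
  Measurable.ite measurableSet_Iio measurable_const
    (Measurable.ite measurableSet_Ioi measurable_const measurable_const)

lemma sign_eq_signType_sign (r : ℝ) : Real.sign r = SignType.sign r := by
  rcases lt_trichotomy r 0 with h | rfl | h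
  · simp [sign_of_neg h, h]
  · simp [sign_zero]
  · simp [sign_of_pos h, h]

lemma abs_sign_le_one (r : ℝ) : |Real.sign r| ≤ 1 := by
  rcases sign_apply_eq r with h | h | h <;> simp [h]

end Real

section SignedPower

variable {b : ℝ}

lemma hasDerivAt_abs_half_sub_rpow_div {x : ℝ} (hb : 0 < b) (hx : 0 < x) (hxb : x ^ b ≠ 1 / 2) :
    HasDerivAt (fun x => -|1 / 2 - x ^ b| / b) (x ^ (b - 1) * Real.sign (1 / 2 - x ^ b)) x := by
  have hpow := (Real.hasDerivAt_rpow_const (p := b) (Or.inl hx.ne')).const_sub (1 / 2)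
  have habs := (hasDerivAt_abs (sub_ne_zero.mpr hxb.symm)).comp x hpow
  refine (habs.neg.div_const b).congr_deriv ?_
  rw [Real.sign_eq_signType_sign]
  field_simp

lemma intervalIntegrable_rpow_mul_sign (hb : 0 < b) :
    IntervalIntegrable (fun x => x ^ (b - 1) * Real.sign (1 / 2 - x ^ b)) volume 0 1 := by
  refine (intervalIntegral.intervalIntegrable_rpow' (r := b - 1) (by linarith)).mono_fun'
    (by fun_prop) (ae_restrict_of_forall_mem measurableSet_uIoc fun x hx => ?_)
  have hx : 0 ≤ x := by
    rw [uIoc_of_le zero_le_one] at hx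
    exact hx.1.le
  dsimp only
  rw [Real.norm_eq_abs, abs_mul, abs_of_nonneg (Real.rpow_nonneg hx _)]
  exact mul_le_of_le_one_right (Real.rpow_nonneg hx _) (Real.abs_sign_le_one _)

theorem integral_rpow_mul_sign_half_sub_rpow (hb : 0 < b) :
    ∫ x in (0 : ℝ)..1, x ^ (b - 1) * Real.sign (1 / 2 - x ^ b) = 0 := by
  rw [integral_eq_of_hasDerivAt_off_countable_of_le (fun x => -|1 / 2 - x ^ b| / b) _
    zero_le_one (countable_singleton ((1 / 2 : ℝ) ^ b⁻¹))
    ((continuous_const.sub (Real.continuous_rpow_const hb.le)).abs.neg.div_const b).continuousOn ?_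
    (intervalIntegrable_rpow_mul_sign hb)]
  · norm_num [Real.zero_rpow hb.ne']
  · rintro x ⟨hx, hx_ne⟩
    refine hasDerivAt_abs_half_sub_rpow_div hb hx.1 fun hxb => hx_ne ?_
    rw [mem_singleton_iff, ← hxb, Real.rpow_rpow_inv hx.1.le hb.ne']

end SignedPower

lemma setIntegral_I01_add_div {f : ℝ → ℝ} (hf : IntervalIntegrable f volume 0 1)
    (hf₀ : ∫ t in (0 : ℝ)..1, f t = 0) (A D : ℝ) :
    ∫ t in I01, (A + f t) / D = A / D := by
  rw [I01, integral_Icc_eq_integral_Ioc, ← intervalIntegral.integral_of_le zero_le_one,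
    intervalIntegral.integral_div, intervalIntegral.integral_add intervalIntegrable_const hf, hf₀]
  simp

lemma setIntegral_c9_fst {a : ℝ} (ha : 0 < a) (y : ℝ) : ∫ x in I01, c9 a x y = 1 := by
  have hb : 0 < 1 / a := one_div_pos.mpr ha
  have hf := (intervalIntegrable_rpow_mul_sign hb).const_mul (1 / 2 - y)
  have hf₀ : ∫ x in (0 : ℝ)..1,
      (1 / 2 - y) * x ^ (1 / a - 1) * Real.sign (1 / 2 - x ^ (1 / a)) = 0 := by
    simp_rw [mul_assoc]
    rw [intervalIntegral.integral_const_mul, integral_rpow_mul_sign_half_sub_rpow hb, mul_zero]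
  simp_rw [← mul_assoc] at hf
  unfold c9
  rw [setIntegral_I01_add_div hf hf₀, add_comm _ (1 : ℝ), div_self (by positivity)]

lemma setIntegral_c9_snd (a x : ℝ) : ∫ y in I01, c9 a x y = 1 := by
  have hf₀ : ∫ y in (0 : ℝ)..1,
      (1 / 2 - y) * x ^ (1 / a - 1) * Real.sign (1 / 2 - x ^ (1 / a)) = 0 := by
    simp only [intervalIntegral.integral_mul_const]
    rw [intervalIntegral.integral_sub intervalIntegrable_const intervalIntegral.intervalIntegrable_id]
    norm_num [integral_id]
  unfold c9
  rw [setIntegral_I01_add_div (Continuous.intervalIntegrable (by fun_prop) 0 1) hf₀,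
    add_comm _ (1 : ℝ), div_self (by positivity)]

lemma div_le_c9 {a x y : ℝ} (ha : a ∈ Ioc 0 1) (hx₀ : 0 ≤ x) (hx₁ : x ≤ 1) (hy : y ∈ I01) :
    (3 * (2 : ℝ) ^ (a - 2) + 1 / 2) / (1 + 3 * (2 : ℝ) ^ (a - 2)) ≤ c9 a x y := by
  have hp : 0 ≤ 1 / a - 1 := sub_nonneg.mpr (one_le_one_div ha.1 ha.2)
  have hy' : |1 / 2 - y| ≤ 1 / 2 := abs_le.mpr ⟨by linarith [hy.2], by linarith [hy.1]⟩
  have hr : |(1 / 2 - y) * x ^ (1 / a - 1) * Real.sign (1 / 2 - x ^ (1 / a))| ≤ 1 / 2 := by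
    rw [abs_mul, abs_mul, abs_of_nonneg (Real.rpow_nonneg hx₀ _)]
    calc |1 / 2 - y| * x ^ (1 / a - 1) * |Real.sign (1 / 2 - x ^ (1 / a))|
        ≤ 1 / 2 * 1 * 1 := by
          gcongr
          · exact Real.rpow_le_one hx₀ hx₁ hp
          · exact Real.abs_sign_le_one _
      _ = 1 / 2 := by ring
  exact div_le_div_of_nonneg_right (by linarith [(abs_le.mp hr).1]) (by positivity)

/-- For `a ∈ (0,1]`, the function `c9 a` is a copula density,
and it satisfies `c(x,y) ≥ (3·2^(a−2) + 1/2)/(1 + 3·2^(a−2)) > 0` for all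
`x ∈ (0,1]`, `y ∈ [0,1]`, i.e. it is bounded away from zero. -/
theorem c9_copula_density_bounded_below (a : ℝ) (ha : a ∈ Set.Ioc (0 : ℝ) 1) :
    (∀ x ∈ Set.Ioc (0 : ℝ) 1, ∀ y ∈ I01, 0 ≤ c9 a x y) ∧
    (∀ᵐ y ∂μ01, (∫ x in I01, c9 a x y) = 1) ∧
    (∀ᵐ x ∂μ01, (∫ y in I01, c9 a x y) = 1) ∧
    (∀ x ∈ Set.Ioc (0 : ℝ) 1, ∀ y ∈ I01,
      (3 * (2 : ℝ) ^ (a - 2) + 1 / 2) / (1 + 3 * (2 : ℝ) ^ (a - 2)) ≤ c9 a x y) ∧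
    0 < (3 * (2 : ℝ) ^ (a - 2) + 1 / 2) / (1 + 3 * (2 : ℝ) ^ (a - 2)) := by
  have hlow : ∀ x ∈ Ioc (0 : ℝ) 1, ∀ y ∈ I01,
      (3 * (2 : ℝ) ^ (a - 2) + 1 / 2) / (1 + 3 * (2 : ℝ) ^ (a - 2)) ≤ c9 a x y :=
    fun x hx y hy => div_le_c9 ha hx.1.le hx.2 hy
  have hpos : 0 < (3 * (2 : ℝ) ^ (a - 2) + 1 / 2) / (1 + 3 * (2 : ℝ) ^ (a - 2)) := by positivity
  exact ⟨fun x hx y hy => hpos.le.trans (hlow x hx y hy),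
    ae_of_all _ fun y => setIntegral_c9_fst ha.1 y,
    ae_of_all _ fun x => setIntegral_c9_snd a x, hlow, hpos⟩
end

section
/- For α, β ≥ 0 with α + β ≤ 1, let C_{α,β}(x,y) = α·min(x,y) + (1−α−β)·xy + β·max(x+y−1, 0) on [0,1]², and let D_{α,β}(x,t) = α·𝟙(t < x) + (1−α−β)·x + β·𝟙(t > 1−x) (the a.e. partial derivative of C_{α,β}(x,·) at t). Then for all a, b, a′, b′ ≥ 0 with a+b ≤ 1 and a′+b′ ≤ 1, and all x, y ∈ [0,1]: ∫₀¹ D_{a,b}(x,t) · D_{a′,b′}(y,t) dt = C_{aa′+bb′, ab′+a′b}(x,y); that is, the fold product of the Frechet copulas C_{a,b} and C_{a′,b′} is the Frechet copula C_{aa′+bb′, ab′+a′b}. -/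
/-!
`D_{α,β}(x,·)` is the combination `α·𝟙_{(-∞,x)} + (1-α-β)·x + β·𝟙_{(1-x,∞)}`, so the integral
over `[0,1]` of a product of two such functions is bilinear in the coefficients. For
`x, y ∈ [0,1]` two lower or two upper indicators integrate to `M(x,y) = min x y`, a lower and an
upper one to `W(x,y) = max (x+y-1) 0`, and the constant terms contribute `x`, `y` or `xy`;
collecting coefficients gives `C_{aa'+bb', ab'+a'b}`.
-/

open MeasureTheory

/-- The Frechet copula `C_{α,β}(x,y) = α·min(x,y) + (1−α−β)·xy + β·max(x+y−1,0)`. -/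
def frechetC (α β x y : ℝ) : ℝ :=
  α * min x y + (1 - α - β) * (x * y) + β * max (x + y - 1) 0

/-- The a.e. partial derivative of the Frechet copula `C_{α,β}(x,·)` at `t`:
`D_{α,β}(x,t) = α·𝟙(t < x) + (1−α−β)·x + β·𝟙(t > 1−x)`. -/
noncomputable def frechetD (α β x t : ℝ) : ℝ :=
  α * (if t < x then 1 else 0) + (1 - α - β) * x + β * (if 1 - x < t then 1 else 0)

open Set

lemma frechetD_mul_eq (α β x : ℝ) (g : ℝ → ℝ) (t : ℝ) :
    frechetD α β x t * g t = α * (Iio x).indicator g t + (1 - α - β) * x * g t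
      + β * (Ioi (1 - x)).indicator g t := by
  simp only [frechetD, indicator_apply, mem_Iio, mem_Ioi]
  split_ifs <;> ring

section
variable {S : Set ℝ} {g : ℝ → ℝ} (α β x : ℝ)

lemma integrableOn_frechetD_mul (hg : IntegrableOn g S) :
    IntegrableOn (fun t => frechetD α β x t * g t) S := by
  simp only [frechetD_mul_eq]
  exact (((hg.indicator measurableSet_Iio).const_mul α).add (hg.const_mul _)).add
    ((hg.indicator measurableSet_Ioi).const_mul β)

lemma setIntegral_frechetD_mul (hg : IntegrableOn g S) :
    ∫ t in S, frechetD α β x t * g t = α * (∫ t in S ∩ Iio x, g t)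
      + (1 - α - β) * x * (∫ t in S, g t) + β * ∫ t in S ∩ Ioi (1 - x), g t := by
  have hlt := (hg.indicator (measurableSet_Iio (a := x))).const_mul α
  have hgt := (hg.indicator (measurableSet_Ioi (a := 1 - x))).const_mul β
  have hc := hg.const_mul ((1 - α - β) * x)
  simp only [frechetD_mul_eq]
  rw [integral_add (by exact hlt.add hc) hgt, integral_add hlt hc,
    integral_const_mul, integral_const_mul, integral_const_mul,
    setIntegral_indicator measurableSet_Iio, setIntegral_indicator measurableSet_Ioi]

lemma integrableOn_frechetD (hS : volume S ≠ ⊤) : IntegrableOn (frechetD α β x) S := by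
  simpa using integrableOn_frechetD_mul α β x (integrableOn_const hS (C := (1 : ℝ)))

lemma setIntegral_frechetD (hS : volume S ≠ ⊤) :
    ∫ t in S, frechetD α β x t = α * volume.real (S ∩ Iio x)
      + (1 - α - β) * x * volume.real S + β * volume.real (S ∩ Ioi (1 - x)) := by
  simpa using setIntegral_frechetD_mul α β x (integrableOn_const hS (C := (1 : ℝ)))

end

lemma volume_I01_ne_top : volume I01 ≠ ⊤ := by
  simp [I01]

section
variable {x y : ℝ}

lemma volume_real_I01 : volume.real I01 = 1 := by
  simp [I01]

lemma volume_real_I01_inter_Iio (hx : x ∈ I01) : volume.real (I01 ∩ Iio x) = x := by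
  have : I01 ∩ Iio x = Ico 0 x := by
    ext t; simp only [I01, mem_inter_iff, mem_Icc, mem_Iio, mem_Ico]; grind [hx.2]
  rw [this, Real.volume_real_Ico_of_le hx.1, sub_zero]

lemma volume_real_I01_inter_Ioi (hx : x ∈ I01) : volume.real (I01 ∩ Ioi (1 - x)) = x := by
  have : I01 ∩ Ioi (1 - x) = Ioc (1 - x) 1 := by
    ext t; simp only [I01, mem_inter_iff, mem_Icc, mem_Ioi, mem_Ioc]; grind [hx.2]
  rw [this, Real.volume_real_Ioc_of_le (by linarith [hx.1]), sub_sub_cancel]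

lemma volume_real_I01_inter_Iio_inter_Iio (hx : x ∈ I01) (hy : y ∈ I01) :
    volume.real (I01 ∩ Iio x ∩ Iio y) = min x y := by
  rw [inter_assoc, Iio_inter_Iio]
  exact volume_real_I01_inter_Iio ⟨le_min hx.1 hy.1, min_le_of_left_le hx.2⟩

lemma volume_real_I01_inter_Ioi_inter_Ioi (hx : x ∈ I01) (hy : y ∈ I01) :
    volume.real (I01 ∩ Ioi (1 - x) ∩ Ioi (1 - y)) = min x y := by
  rw [inter_assoc, Ioi_inter_Ioi, max_sub_sub_left]
  exact volume_real_I01_inter_Ioi ⟨le_min hx.1 hy.1, min_le_of_left_le hx.2⟩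

lemma volume_real_I01_inter_Iio_inter_Ioi (hx : x ∈ I01) (hy : y ∈ I01) :
    volume.real (I01 ∩ Iio x ∩ Ioi (1 - y)) = max (x + y - 1) 0 := by
  have : I01 ∩ Iio x ∩ Ioi (1 - y) = Ioo (1 - y) x := by
    ext t; simp only [I01, mem_inter_iff, mem_Icc, mem_Iio, mem_Ioi, mem_Ioo]; grind [hx.2, hy.2]
  rw [this, Real.volume_real_Ioo, sub_sub_eq_add_sub]

lemma volume_real_I01_inter_Ioi_inter_Iio (hx : x ∈ I01) (hy : y ∈ I01) :
    volume.real (I01 ∩ Ioi (1 - x) ∩ Iio y) = max (x + y - 1) 0 := by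
  rw [inter_right_comm, volume_real_I01_inter_Iio_inter_Ioi hy hx, add_comm y]

end

theorem frechet_fold_product_general (a b a' b' : ℝ)
    (x y : ℝ) (hx : x ∈ I01) (hy : y ∈ I01) :
    (∫ t in I01, frechetD a b x t * frechetD a' b' y t) =
      frechetC (a * a' + b * b') (a * b' + a' * b) x y := by
  have hfin : ∀ s, volume (I01 ∩ s) ≠ ⊤ := fun s =>
    measure_ne_top_of_subset inter_subset_left volume_I01_ne_top
  rw [setIntegral_frechetD_mul a b x (integrableOn_frechetD a' b' y volume_I01_ne_top),
    setIntegral_frechetD _ _ _ (hfin _), setIntegral_frechetD _ _ _ (hfin _),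
    setIntegral_frechetD _ _ _ volume_I01_ne_top,
    volume_real_I01_inter_Iio_inter_Iio hx hy, volume_real_I01_inter_Iio_inter_Ioi hx hy,
    volume_real_I01_inter_Ioi_inter_Iio hx hy, volume_real_I01_inter_Ioi_inter_Ioi hx hy,
    volume_real_I01_inter_Iio hx, volume_real_I01_inter_Ioi hx, volume_real_I01_inter_Iio hy,
    volume_real_I01_inter_Ioi hy, volume_real_I01, frechetC]
  ring

/-- The fold product of the Frechet copulas `C_{a,b}` and
`C_{a′,b′}` is the Frechet copula `C_{aa′+bb′, ab′+a′b}`: for all admissible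
parameters and all `x, y ∈ [0,1]`,
`∫₀¹ D_{a,b}(x,t)·D_{a′,b′}(y,t) dt = C_{aa′+bb′, ab′+a′b}(x,y)`. -/
theorem frechet_fold_product (a b a' b' : ℝ)
    (ha : 0 ≤ a) (hb : 0 ≤ b) (hab : a + b ≤ 1)
    (ha' : 0 ≤ a') (hb' : 0 ≤ b') (hab' : a' + b' ≤ 1)
    (x y : ℝ) (hx : x ∈ I01) (hy : y ∈ I01) :
    (∫ t in I01, frechetD a b x t * frechetD a' b' y t) =
      frechetC (a * a' + b * b') (a * b' + a' * b) x y :=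
  frechet_fold_product_general a b a' b' x y hx hy
end

section
/- Let a ∈ [0,1] and let μ_a be the probability measure on [0,1]² given by μ_a = a·(pushforward of Lebesgue measure on [0,1] under x ↦ (x,x)) + (1−a)·(pushforward of Lebesgue measure under x ↦ (x,1−x)) (the copula measure of a M + (1−a) W). Then the function f(x) = √2·cos(2πx) satisfies ∫₀¹ f = 0, ∫₀¹ f² = 1, and ∫_{[0,1]²} f(x) f(y) μ_a(d(x,y)) = 1. Hence the maximal correlation coefficient ρ₁ of μ_a equals 1, so Markov chains generated by copulas of the form a M + (1−a) W are not ρ-mixing. -/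
open MeasureTheory

/-- The copula measure of `a·M + (1−a)·W`: `a` times the uniform measure on the
diagonal plus `1−a` times the uniform measure on the antidiagonal of `[0,1]²`. -/
noncomputable def muMW (a : ℝ) : Measure (ℝ × ℝ) :=
  ENNReal.ofReal a • μ01.map (fun x => (x, x)) +
    ENNReal.ofReal (1 - a) • μ01.map (fun x => (x, 1 - x))

/-!
Both marginals of `μ_a` are Lebesgue measure on `[0,1]`, so for normalized `f, g` the bound
`f x g y ≤ (f x ² + g y ²) / 2` integrates to `∫ f(x) g(y) dμ_a ≤ 1`.  The function
`f(x) = √2 cos(2πx)` is centred, normalized and symmetric, `f (1 - x) = f x`, so `f y = f x`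
on both the diagonal and the antidiagonal; hence `∫ f(x) f(y) dμ_a = ∫ f² = 1` and the
supremum is attained.
-/

open Real

section Coupling

variable {α β : Type*} [MeasurableSpace α] [MeasurableSpace β] {μ : Measure (α × β)}
  {ν₁ : Measure α} {ν₂ : Measure β}

theorem MeasureTheory.MeasurePreserving.integral_comp_of_integrable {γ : Type*}
    [MeasurableSpace γ] {ν : Measure γ} {φ : α → γ} (hφ : MeasurePreserving φ ν₁ ν) {g : γ → ℝ}
    (hg : Integrable g ν) : ∫ x, g (φ x) ∂ν₁ = ∫ y, g y ∂ν := by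
  rw [← hφ.map_eq] at hg ⊢
  exact (integral_map hφ.measurable.aemeasurable hg.aestronglyMeasurable).symm

theorem integral_mul_le_one_of_marginals (h₁ : MeasurePreserving Prod.fst μ ν₁)
    (h₂ : MeasurePreserving Prod.snd μ ν₂) {f : α → ℝ} {g : β → ℝ}
    (hf : ∫ x, f x ^ 2 ∂ν₁ = 1) (hg : ∫ y, g y ^ 2 ∂ν₂ = 1) :
    ∫ p, f p.1 * g p.2 ∂μ ≤ 1 := by
  by_cases hfg : Integrable (fun p => f p.1 * g p.2) μ
  swap
  · rw [integral_undef hfg]; exact zero_le_one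
  have hf_int : Integrable (fun x => f x ^ 2) ν₁ := .of_integral_ne_zero (by simp [hf])
  have hg_int : Integrable (fun y => g y ^ 2) ν₂ := .of_integral_ne_zero (by simp [hg])
  have hf₁ : Integrable (fun p : α × β => f p.1 ^ 2) μ := h₁.integrable_comp_of_integrable hf_int
  have hg₂ : Integrable (fun p : α × β => g p.2 ^ 2) μ := h₂.integrable_comp_of_integrable hg_int
  calc ∫ p, f p.1 * g p.2 ∂μ ≤ ∫ p, (f p.1 ^ 2 + g p.2 ^ 2) / 2 ∂μ :=
        integral_mono hfg ((hf₁.add hg₂).div_const 2) fun p => by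
          nlinarith [sq_nonneg (f p.1 - g p.2)]
    _ = ((∫ x, f x ^ 2 ∂ν₁) + ∫ y, g y ^ 2 ∂ν₂) / 2 := by
        rw [integral_div, integral_add hf₁ hg₂, h₁.integral_comp_of_integrable hf_int,
          h₂.integral_comp_of_integrable hg_int]
    _ = 1 := by rw [hf, hg]; norm_num

theorem integral_mul_eq_one_of_ae_eq (h₁ : MeasurePreserving Prod.fst μ ν₁) {f : α → ℝ}
    {g : β → ℝ} (hf : ∫ x, f x ^ 2 ∂ν₁ = 1) (hfg : ∀ᵐ p ∂μ, g p.2 = f p.1) :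
    ∫ p, f p.1 * g p.2 ∂μ = 1 := by
  have hf_int : Integrable (fun x => f x ^ 2) ν₁ := .of_integral_ne_zero (by simp [hf])
  calc ∫ p, f p.1 * g p.2 ∂μ = ∫ p, f p.1 ^ 2 ∂μ :=
        integral_congr_ae (hfg.mono fun p hp => by simp only [hp, sq])
    _ = 1 := by rw [h₁.integral_comp_of_integrable hf_int, hf]

end Coupling

instance isFiniteMeasure_μ01 : IsFiniteMeasure μ01 := Real.isFiniteMeasure_restrict_Icc 0 1

theorem measurePreserving_one_sub_μ01 : MeasurePreserving (fun x : ℝ => 1 - x) μ01 μ01 := by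
  have hpre : (fun x : ℝ => 1 - x) ⁻¹' I01 = I01 := by
    ext x
    simp only [I01, Set.mem_preimage, Set.mem_Icc]
    constructor <;> rintro ⟨h0, h1⟩ <;> constructor <;> linarith
  have h := (Measure.measurePreserving_sub_left volume (1 : ℝ)).restrict_preimage
    (s := I01) measurableSet_Icc
  rw [hpre] at h
  exact h

theorem ofReal_smul_add_ofReal_one_sub_smul {γ : Type*} [MeasurableSpace γ] {a : ℝ}
    (ha : a ∈ Set.Icc (0 : ℝ) 1) (ν : Measure γ) :
    ENNReal.ofReal a • ν + ENNReal.ofReal (1 - a) • ν = ν := by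
  rw [← add_smul, ← ENNReal.ofReal_add ha.1 (sub_nonneg.2 ha.2), add_sub_cancel,
    ENNReal.ofReal_one, one_smul]

theorem measurePreserving_fst_muMW {a : ℝ} (ha : a ∈ Set.Icc (0 : ℝ) 1) :
    MeasurePreserving Prod.fst (muMW a) μ01 := by
  refine ⟨measurable_fst, ?_⟩
  rw [muMW, Measure.map_add _ _ measurable_fst, Measure.map_smul, Measure.map_smul,
    Measure.map_map measurable_fst (by fun_prop), Measure.map_map measurable_fst (by fun_prop)]
  simpa [Function.comp_def] using ofReal_smul_add_ofReal_one_sub_smul ha μ01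

theorem measurePreserving_snd_muMW {a : ℝ} (ha : a ∈ Set.Icc (0 : ℝ) 1) :
    MeasurePreserving Prod.snd (muMW a) μ01 := by
  refine ⟨measurable_snd, ?_⟩
  rw [muMW, Measure.map_add _ _ measurable_snd, Measure.map_smul, Measure.map_smul,
    Measure.map_map measurable_snd (by fun_prop), Measure.map_map measurable_snd (by fun_prop)]
  simpa [Function.comp_def, measurePreserving_one_sub_μ01.map_eq] using
    ofReal_smul_add_ofReal_one_sub_smul ha μ01

theorem ae_muMW {a : ℝ} {P : ℝ × ℝ → Prop} (hP : MeasurableSet {p | P p})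
    (hdiag : ∀ x, P (x, x)) (hanti : ∀ x, P (x, 1 - x)) : ∀ᵐ p ∂muMW a, P p := by
  rw [muMW, ae_add_measure_iff]
  exact ⟨Measure.ae_smul_measure ((ae_map_iff (by fun_prop) hP).2 (.of_forall hdiag)) _,
    Measure.ae_smul_measure ((ae_map_iff (by fun_prop) hP).2 (.of_forall hanti)) _⟩

theorem integral_cos_two_pi_mul_I01 : ∫ x in I01, cos (2 * π * x) = 0 := by
  rw [I01, integral_Icc_eq_integral_Ioc, ← intervalIntegral.integral_of_le zero_le_one,
    intervalIntegral.integral_comp_mul_left (fun x => cos x) (by positivity)]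
  simp

theorem integral_cos_two_pi_mul_sq_I01 : ∫ x in I01, cos (2 * π * x) ^ 2 = 1 / 2 := by
  rw [I01, integral_Icc_eq_integral_Ioc, ← intervalIntegral.integral_of_le zero_le_one,
    intervalIntegral.integral_comp_mul_left (fun x => cos x ^ 2) (by positivity),
    integral_cos_sq, mul_one, mul_zero, sin_two_pi, sin_zero, smul_eq_mul]
  field_simp
  ring

theorem cos_two_pi_mul_one_sub (x : ℝ) : cos (2 * π * (1 - x)) = cos (2 * π * x) := by
  rw [mul_one_sub, cos_two_pi_sub]

theorem memLp_sqrt_two_mul_cos_two_pi_mul :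
    MemLp (fun x => √2 * cos (2 * π * x)) 2 μ01 := by
  refine MemLp.of_bound (by fun_prop : Continuous _).aestronglyMeasurable √2
    (.of_forall fun x => ?_)
  rw [norm_mul, norm_of_nonneg (sqrt_nonneg 2)]
  exact mul_le_of_le_one_right (sqrt_nonneg 2) (abs_cos_le_one _)

/-- For `a ∈ [0,1]` and `μ_a` the copula measure of
`a M + (1−a) W`, the function `f(x) = √2·cos(2πx)` satisfies `∫₀¹ f = 0`,
`∫₀¹ f² = 1` and `∫ f(x) f(y) μ_a(d(x,y)) = 1`.  Hence the maximal correlation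
coefficient `ρ₁` of `μ_a` equals `1`, so Markov chains generated by copulas of
the form `a M + (1−a) W` are not `ρ`-mixing. -/
theorem convex_MW_not_rho_mixing (a : ℝ) (ha : a ∈ Set.Icc (0 : ℝ) 1) :
    (∫ x in I01, Real.sqrt 2 * Real.cos (2 * Real.pi * x)) = 0 ∧
    (∫ x in I01, (Real.sqrt 2 * Real.cos (2 * Real.pi * x)) ^ 2) = 1 ∧
    (∫ p, (Real.sqrt 2 * Real.cos (2 * Real.pi * p.1)) *
        (Real.sqrt 2 * Real.cos (2 * Real.pi * p.2)) ∂(muMW a)) = 1 ∧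
    sSup {r : ℝ | ∃ f g : ℝ → ℝ, MemLp f 2 μ01 ∧ MemLp g 2 μ01 ∧
        (∫ x in I01, f x) = 0 ∧ (∫ x in I01, g x) = 0 ∧
        (∫ x in I01, f x ^ 2) = 1 ∧ (∫ x in I01, g x ^ 2) = 1 ∧
        r = ∫ p, f p.1 * g p.2 ∂(muMW a)} = 1 := by
  have h_mean : ∫ x in I01, √2 * cos (2 * π * x) = 0 := by
    rw [integral_const_mul, integral_cos_two_pi_mul_I01, mul_zero]
  have h_sq : ∫ x in I01, (√2 * cos (2 * π * x)) ^ 2 = 1 := by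
    simp_rw [mul_pow, sq_sqrt zero_le_two]
    rw [integral_const_mul, integral_cos_two_pi_mul_sq_I01]
    norm_num
  have h_corr : ∫ p, (√2 * cos (2 * π * p.1)) * (√2 * cos (2 * π * p.2)) ∂(muMW a) = 1 :=
    integral_mul_eq_one_of_ae_eq (g := fun x => √2 * cos (2 * π * x))
      (measurePreserving_fst_muMW ha) h_sq
      (ae_muMW (measurableSet_eq_fun (by fun_prop) (by fun_prop)) (fun _ => rfl)
        fun x => by simp only [cos_two_pi_mul_one_sub])
  refine ⟨h_mean, h_sq, h_corr, IsGreatest.csSup_eq ⟨?_, ?_⟩⟩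
  · exact ⟨_, _, memLp_sqrt_two_mul_cos_two_pi_mul, memLp_sqrt_two_mul_cos_two_pi_mul,
      h_mean, h_mean, h_sq, h_sq, h_corr.symm⟩
  · rintro r ⟨f, g, -, -, -, -, hf, hg, rfl⟩
    exact integral_mul_le_one_of_marginals (measurePreserving_fst_muMW ha)
      (measurePreserving_snd_muMW ha) hf hg
end

section
/- Let (φ_i)_{i≥1} be an orthonormal family in L²(0,1), let (λ_i)_{i≥1} be nonnegative reals with ∑ λ_i < ∞, and suppose c ∈ L²([0,1]²) satisfies c(u,v) = 1 + ∑_{i≥1} λ_i φ_i(u) φ_i(v) with convergence in L²([0,1]²). Then for every Borel measurable set B ⊆ [0,1], ∫₀¹ |∫_B (c(u,v) − 1) du| dv ≤ ∑_{i≥1} λ_i. (Applied to the k-step kernel with coefficients λ_i^k, this yields the bound β_k ≤ ∑ λ_i^k ≤ M λ₁^k on the absolute regularity coefficient of the Markov chain generated by a symmetric copula with square-integrable density.) -/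
open MeasureTheory Filter

/-!
Truncate the expansion: `c - 1 = r_N + ∑_{i<N} λ_i φ_i(u) φ_i(v)`. Since `B ⊆ [0,1]`, integrating
over `B` instead of `[0,1]` can only decrease the absolute integrals, so the remainder contributes
at most `‖r_N‖₁ ≤ ‖r_N‖₂` (Cauchy–Schwarz on a probability space) and the `i`-th rank-one term at
most `λ_i ‖φ_i‖₁² ≤ λ_i ‖φ_i‖₂² = λ_i`. Letting `N → ∞` sends `‖r_N‖₂` to `0`.
-/

instance isProbabilityMeasure_μ01 : IsProbabilityMeasure μ01 :=
  ⟨by simp [μ01, I01, Real.volume_Icc]⟩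

section

variable {α : Type*} [MeasurableSpace α] {μ ν : Measure α}

lemma abs_integral_le_integral_abs_of_le {g : α → ℝ} (hνμ : ν ≤ μ) (hg : Integrable g μ) :
    |∫ x, g x ∂ν| ≤ ∫ x, |g x| ∂μ :=
  (abs_integral_le_integral_abs).trans
    (integral_mono_measure hνμ (ae_of_all _ fun _ => abs_nonneg _) hg.abs)

/-- Cauchy–Schwarz against the constant `1`, obtained from `Var |h| ≥ 0`. -/
lemma integral_abs_le_sqrt_integral_sq [IsProbabilityMeasure μ] {h : α → ℝ} (hh : MemLp h 2 μ) :
    ∫ x, |h x| ∂μ ≤ √(∫ x, h x ^ 2 ∂μ) := by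
  have hvar := ProbabilityTheory.variance_eq_sub hh.abs
  rw [Real.le_sqrt (integral_nonneg fun _ => abs_nonneg _) (integral_nonneg fun _ => sq_nonneg _)]
  simpa only [hvar, Pi.pow_apply, Pi.abs_apply, sq_abs, sub_nonneg]
    using ProbabilityTheory.variance_nonneg |h| μ

lemma MeasureTheory.MemLp.mul_prod {β : Type*} [MeasurableSpace β] {κ : Measure β}
    {f : α → ℝ} {g : β → ℝ} (hf : MemLp f 2 μ) (hg : MemLp g 2 κ) :
    MemLp (fun p : α × β => f p.1 * g p.2) 2 (μ.prod κ) := by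
  refine (memLp_two_iff_integrable_sq
    (hf.aestronglyMeasurable.comp_fst.mul hg.aestronglyMeasurable.comp_snd)).2 ?_
  simpa only [Pi.mul_apply, mul_pow] using hf.integrable_sq.mul_prod hg.integrable_sq

lemma abs_integral_add_sum_le {ι : Type*} {s : Finset ι} {F : α → ℝ} {φ : ι → α → ℝ}
    {lam w : ι → ℝ} (hνμ : ν ≤ μ) (hF : Integrable F μ) (hφ : ∀ i ∈ s, Integrable (φ i) μ)
    (hφ_abs : ∀ i ∈ s, ∫ x, |φ i x| ∂μ ≤ 1) (hlam : ∀ i ∈ s, 0 ≤ lam i) :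
    |∫ u, (F u + ∑ i ∈ s, lam i * φ i u * w i) ∂ν|
      ≤ ∫ u, |F u| ∂μ + ∑ i ∈ s, lam i * |w i| := by
  have hterm : ∀ i ∈ s, Integrable (fun u => lam i * φ i u * w i) ν :=
    fun i hi => (((hφ i hi).mono_measure hνμ).const_mul (lam i)).mul_const (w i)
  rw [integral_add (hF.mono_measure hνμ) (integrable_finsetSum _ hterm),
    integral_finsetSum _ hterm]
  refine (abs_add_le _ _).trans (add_le_add (abs_integral_le_integral_abs_of_le hνμ hF) ?_)
  refine (Finset.abs_sum_le_sum_abs _ _).trans (Finset.sum_le_sum fun i hi => ?_)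
  have hφν : |∫ u, φ i u ∂ν| ≤ 1 :=
    (abs_integral_le_integral_abs_of_le hνμ (hφ i hi)).trans (hφ_abs i hi)
  rw [integral_mul_const, integral_const_mul, abs_mul, abs_mul, abs_of_nonneg (hlam i hi)]
  exact mul_le_mul_of_nonneg_right (mul_le_of_le_one_right (hlam i hi) hφν) (abs_nonneg _)

lemma integral_abs_integral_le_sqrt_add_sum [IsProbabilityMeasure μ] {ι : Type*} (s : Finset ι)
    {g : α → α → ℝ} {φ : ι → α → ℝ} {lam : ι → ℝ} (hνμ : ν ≤ μ)
    (hφ : ∀ i ∈ s, MemLp (φ i) 2 μ) (hφ_sq : ∀ i ∈ s, ∫ x, φ i x ^ 2 ∂μ = 1)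
    (hlam : ∀ i ∈ s, 0 ≤ lam i)
    (hrem : MemLp (fun p : α × α => g p.1 p.2 - ∑ i ∈ s, lam i * φ i p.1 * φ i p.2) 2
      (μ.prod μ)) :
    ∫ v, |∫ u, g u v ∂ν| ∂μ ≤
      √(∫ p, (g p.1 p.2 - ∑ i ∈ s, lam i * φ i p.1 * φ i p.2) ^ 2 ∂(μ.prod μ))
        + ∑ i ∈ s, lam i := by
  set f := fun p : α × α => g p.1 p.2 - ∑ i ∈ s, lam i * φ i p.1 * φ i p.2
  have hf : Integrable f (μ.prod μ) := hrem.integrable one_le_two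
  have hφ_int : ∀ i ∈ s, Integrable (φ i) μ := fun i hi => (hφ i hi).integrable one_le_two
  have hφ_abs : ∀ i ∈ s, ∫ x, |φ i x| ∂μ ≤ 1 := fun i hi =>
    (integral_abs_le_sqrt_integral_sq (hφ i hi)).trans_eq (by rw [hφ_sq i hi, Real.sqrt_one])
  have hterm : ∀ i ∈ s, Integrable (fun v => lam i * |φ i v|) μ :=
    fun i hi => (hφ_int i hi).abs.const_mul (lam i)
  have hslice : Integrable (fun v => ∫ u, |f (u, v)| ∂μ) μ := hf.abs.integral_prod_right
  have hbound : ∀ᵐ v ∂μ, |∫ u, g u v ∂ν| ≤ ∫ u, |f (u, v)| ∂μ + ∑ i ∈ s, lam i * |φ i v| := by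
    filter_upwards [hf.prod_left_ae] with v hv
    have hsplit : (fun u => g u v) = fun u => f (u, v) + ∑ i ∈ s, lam i * φ i u * φ i v := by
      funext u; simp only [f, sub_add_cancel]
    rw [hsplit]
    exact abs_integral_add_sum_le hνμ hv hφ_int hφ_abs hlam
  calc ∫ v, |∫ u, g u v ∂ν| ∂μ
      ≤ ∫ v, (∫ u, |f (u, v)| ∂μ + ∑ i ∈ s, lam i * |φ i v|) ∂μ :=
        integral_mono_of_nonneg (ae_of_all _ fun _ => abs_nonneg _)
          (hslice.add (integrable_finsetSum _ hterm)) hbound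
    _ = ∫ p, |f p| ∂(μ.prod μ) + ∑ i ∈ s, lam i * ∫ v, |φ i v| ∂μ := by
        rw [integral_add hslice (integrable_finsetSum _ hterm), integral_finsetSum _ hterm,
          integral_prod_symm _ hf.abs]
        simp only [integral_const_mul]
    _ ≤ √(∫ p, f p ^ 2 ∂(μ.prod μ)) + ∑ i ∈ s, lam i :=
        add_le_add (integral_abs_le_sqrt_integral_sq hrem)
          (Finset.sum_le_sum fun i hi => mul_le_of_le_one_right (hlam i hi) (hφ_abs i hi))

end

/-- Let `(φ i)` (indexed by `ℕ`, representing `i ≥ 1`) be an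
orthonormal family in `L²(0,1)`, `(λ i)` nonnegative reals with `∑ λ i < ∞`,
and suppose `c ∈ L²([0,1]²)` satisfies `c(u,v) = 1 + ∑ᵢ λ i·φ i(u)·φ i(v)` with
convergence in `L²([0,1]²)`.  Then for every Borel measurable `B ⊆ [0,1]`,
`∫₀¹ |∫_B (c(u,v) − 1) du| dv ≤ ∑ᵢ λ i`.  (Applied to the `k`-step kernel with
coefficients `λᵢᵏ`, this bounds the absolute regularity coefficient:
`β_k ≤ ∑ λᵢᵏ ≤ M λ₁ᵏ`.) -/
theorem beta_coefficient_spectral_bound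
    (φ : ℕ → ℝ → ℝ) (lam : ℕ → ℝ) (c : ℝ → ℝ → ℝ)
    (hφ_L2 : ∀ i, MemLp (φ i) 2 μ01)
    (hφ_ortho : ∀ i j, (∫ x in I01, φ i x * φ j x) = if i = j then 1 else 0)
    (hlam_nonneg : ∀ i, 0 ≤ lam i)
    (hlam_sum : Summable lam)
    (hc_L2 : MemLp (Function.uncurry c) 2 (μ01.prod μ01))
    (hc_repr : Tendsto (fun N =>
        ∫ p, (c p.1 p.2 - 1 -
          ∑ i ∈ Finset.range N, lam i * φ i p.1 * φ i p.2) ^ 2 ∂(μ01.prod μ01))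
      atTop (nhds 0)) :
    ∀ B : Set ℝ, MeasurableSet B → B ⊆ I01 →
      (∫ v in I01, |∫ u in B, (c u v - 1)|) ≤ ∑' i, lam i := by
  intro B _ hBI
  change ∫ v, |∫ u in B, (c u v - 1)| ∂μ01 ≤ _
  have hφ_sq : ∀ i, ∫ x, φ i x ^ 2 ∂μ01 = 1 := fun i => by
    simpa [μ01, sq] using hφ_ortho i i
  have hrem : ∀ N, MemLp (fun p : ℝ × ℝ => c p.1 p.2 - 1 -
      ∑ i ∈ Finset.range N, lam i * φ i p.1 * φ i p.2) 2 (μ01.prod μ01) := fun N =>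
    (hc_L2.sub (memLp_const 1)).sub (memLp_finsetSum _ fun i _ => by
      simpa only [mul_assoc] using ((hφ_L2 i).mul_prod (hφ_L2 i)).const_mul (lam i))
  have hlim : Tendsto (fun N => √(∫ p, (c p.1 p.2 - 1 -
      ∑ i ∈ Finset.range N, lam i * φ i p.1 * φ i p.2) ^ 2 ∂(μ01.prod μ01))
        + ∑ i ∈ Finset.range N, lam i) atTop (nhds (∑' i, lam i)) := by
    simpa using ((Real.continuous_sqrt.tendsto 0).comp hc_repr).add hlam_sum.hasSum.tendsto_sum_nat
  exact ge_of_tendsto' hlim fun N =>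
    integral_abs_integral_le_sqrt_add_sum (g := fun u v => c u v - 1) (Finset.range N)
      (Measure.restrict_mono hBI le_rfl) (fun i _ => hφ_L2 i) (fun i _ => hφ_sq i)
      (fun i _ => hlam_nonneg i) (hrem N)
end
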